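/- arXiv:1809.09047 — 6 statements merged into one kernel-verified Lean document; each statement's English description precedes it below -/
import Mathlib

section
/- For words u and v of length at most 2k-1 over an alphabet, u is k-abelian equivalent to v if and only if u = v. -/
/-!
Counting left extensions shows that `w` is a prefix of `u` exactly when `w` occurs in `u` once
more than all the words `a :: w` together. Hence `k`-abelian equivalent words have the same
prefixes of length `k - 1` and, by reversal, the same suffixes of length `k - 1`. In a word of
length at most `2k - 1` these leave at most the letter at position `k - 1` uncovered, and that
letter is forced by the letter counts.
-/

/-- Number of occurrences of `w` as a (contiguous) factor of `u`. -/
def occ {A : Type*} [DecidableEq A] (w u : List A) : ℕ :=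
  ((Finset.range (u.length + 1 - w.length)).filter
    (fun i => (u.drop i).take w.length = w)).card

/-- `k`-abelian equivalence: equal numbers of occurrences of every nonempty
word of length at most `k`. -/
def KAbelianEq {A : Type*} [DecidableEq A] (k : ℕ) (u v : List A) : Prop :=
  ∀ w : List A, w ≠ [] → w.length ≤ k → occ w u = occ w v

theorem List.Perm.eq_of_tail_eq {α : Type*} {l₁ l₂ : List α} (h : l₁.Perm l₂)
    (ht : l₁.tail = l₂.tail) : l₁ = l₂ := by
  match l₁, l₂, h.length_eq with
  | [], [], _ => rfl
  | a :: t, b :: t', _ =>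
    obtain rfl : t = t' := ht
    obtain rfl : a = b := by
      simpa using (List.perm_append_right_iff (l₁ := [a]) (l₂ := [b]) t).mp h
    rfl

theorem List.take_drop_reverse {α : Type*} (l : List α) {i m : ℕ}
    (h : i + m ≤ l.length) :
    (l.reverse.drop (l.length - m - i)).take m = ((l.drop i).take m).reverse := by
  rw [List.drop_reverse, show l.length - (l.length - m - i) = i + m by omega, List.take_reverse,
    List.length_take, min_eq_left h, Nat.add_sub_cancel, List.drop_take, Nat.add_sub_cancel_left]

section Occ

variable {A : Type*} [DecidableEq A]

theorem occ_nil (w : List A) : occ w [] = if w = [] then 1 else 0 := by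
  cases w <;> simp [occ]

theorem occ_cons (w : List A) (b : A) (t : List A) :
    occ w (b :: t) = occ w t + if w <+: b :: t then 1 else 0 := by
  simp only [List.prefix_iff_eq_take, eq_comm (a := w)]
  unfold occ
  rcases le_or_gt w.length (t.length + 1) with h | h
  · rw [List.length_cons,
      show t.length + 1 + 1 - w.length = (t.length + 1 - w.length) + 1 by omega,
      Finset.card_filter, Finset.card_filter, Finset.sum_range_succ']
    simp
  · have hne : b :: t ≠ w := fun e => by simp [← e] at h
    rw [List.length_cons, show t.length + 1 + 1 - w.length = 0 by omega,
      show t.length + 1 - w.length = 0 by omega, List.take_of_length_le (by simp; omega)]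
    simp [hne]

theorem occ_singleton (a : A) (u : List A) : occ [a] u = u.count a := by
  induction u with
  | nil => simp [occ_nil]
  | cons b t ih => simp [occ_cons, ih, List.count_cons, @eq_comm _ b a]

theorem occ_eq_sum_occ_cons_add_ite (w : List A) {s : Finset A} {u : List A}
    (hs : ∀ b ∈ u, b ∈ s) :
    occ w u = ∑ a ∈ s, occ (a :: w) u + if w <+: u then 1 else 0 := by
  induction u with
  | nil => simp [occ_nil]
  | cons b t ih =>
    have hb : ∑ a ∈ s, (if a :: w <+: b :: t then 1 else 0) = if w <+: t then 1 else 0 := by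
      simp only [List.cons_prefix_cons, ite_and]
      rw [Finset.sum_ite_eq' s b]
      simp [hs b List.mem_cons_self]
    rw [occ_cons, ih fun c hc => hs c (List.mem_cons_of_mem b hc)]
    simp only [occ_cons, Finset.sum_add_distrib, hb]

theorem occ_reverse (w u : List A) : occ w.reverse u.reverse = occ w u := by
  unfold occ
  simp only [List.length_reverse, Finset.card_filter]
  rw [← Finset.sum_range_reflect]
  refine Finset.sum_congr rfl fun j hj => if_congr ?_ rfl rfl
  rw [Finset.mem_range] at hj
  rw [show u.length + 1 - w.length - 1 - j = u.length - w.length - j by omega,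
    List.take_drop_reverse u (by omega), List.reverse_inj]

end Occ

namespace KAbelianEq

variable {A : Type*} [DecidableEq A] {k : ℕ} {u v : List A}

theorem perm (h : KAbelianEq k u v) (hk : 1 ≤ k) : u.Perm v :=
  List.perm_iff_count.mpr fun a => by
    rw [← occ_singleton, ← occ_singleton]
    exact h [a] (List.cons_ne_nil a []) hk

theorem reverse (h : KAbelianEq k u v) : KAbelianEq k u.reverse v.reverse := by
  intro w hw hwk
  have hrev (x : List A) : occ w x.reverse = occ w.reverse x := by
    simpa using occ_reverse w.reverse x
  rw [hrev, hrev]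
  exact h w.reverse (by simpa using hw) (by simpa using hwk)

theorem isPrefix (h : KAbelianEq k u v) {w : List A} (hwk : w.length < k) (hwu : w <+: u) :
    w <+: v := by
  rcases eq_or_ne w [] with rfl | hw
  · exact List.nil_prefix
  classical
  let s := u.toFinset ∪ v.toFinset
  have hu := occ_eq_sum_occ_cons_add_ite w (s := s) (u := u) fun b hb => by simp [s, hb]
  have hv := occ_eq_sum_occ_cons_add_ite w (s := s) (u := v) fun b hb => by simp [s, hb]
  have hext : ∑ a ∈ s, occ (a :: w) u = ∑ a ∈ s, occ (a :: w) v :=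
    Finset.sum_congr rfl fun a _ => h (a :: w) (List.cons_ne_nil a w) hwk
  rw [if_pos hwu, h w hw hwk.le, hext] at hu
  by_contra hwv
  rw [if_neg hwv] at hv
  omega

theorem take_eq (h : KAbelianEq k u v) {m : ℕ} (hm : m < k) : u.take m = v.take m := by
  have hlen := (h.perm (by omega)).length_eq
  have hv := List.prefix_iff_eq_take.mp (h.isPrefix (by simp; omega) (List.take_prefix m u))
  rw [hv, List.length_take, hlen, ← List.take_eq_take_min]

theorem drop_eq (h : KAbelianEq k u v) {m : ℕ} (hm : u.length - m < k) :
    u.drop m = v.drop m := by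
  have hlen := (h.perm (by omega)).length_eq
  have hrev (x : List A) : x.drop m = (x.reverse.take (x.length - m)).reverse := by
    rw [List.take_reverse, List.reverse_reverse]
    rcases le_or_gt m x.length with hmx | hmx
    · rw [Nat.sub_sub_self hmx]
    · simp [List.drop_of_length_le hmx.le]
      omega
  rw [hrev u, hrev v, h.reverse.take_eq hm, hlen]

end KAbelianEq

theorem kabelian_eq_iff_eq_of_short_general {A : Type*} [DecidableEq A] (k : ℕ) (hk : 1 ≤ k)
    (u v : List A) (hu : u.length ≤ 2 * k - 1) :
    KAbelianEq k u v ↔ u = v := by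
  refine ⟨fun h => ?_, fun huv => huv ▸ fun _ _ _ => rfl⟩
  have hperm := h.perm hk
  have hprefix : u.take (k - 1) = v.take (k - 1) := h.take_eq (by omega)
  have hsuffix : u.drop k = v.drop k := h.drop_eq (by omega)
  -- The middle letter at position `k - 1`, if any, is forced by the letter counts.
  have hmiddle : u.drop (k - 1) = v.drop (k - 1) := by
    refine List.Perm.eq_of_tail_eq ?_ ?_
    · rw [← List.take_append_drop (k - 1) u, ← List.take_append_drop (k - 1) v, hprefix]
        at hperm
      exact (List.perm_append_left_iff _).mp hperm
    · rwa [List.tail_drop, List.tail_drop, Nat.sub_add_cancel hk]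
  rw [← List.take_append_drop (k - 1) u, ← List.take_append_drop (k - 1) v, hprefix, hmiddle]

theorem kabelian_eq_iff_eq_of_short {A : Type*} [DecidableEq A] (k : ℕ) (hk : 1 ≤ k)
    (u v : List A) (hu : u.length ≤ 2 * k - 1) (hv : v.length ≤ 2 * k - 1) :
    KAbelianEq k u v ↔ u = v :=
  kabelian_eq_iff_eq_of_short_general k hk u v hu
end

section
/- Let w be an infinite binary word such that for all factors u, v of w of equal length, if u and v share a common first letter and a common last letter then u and v are abelian equivalent. Then w is ultimately periodic. -/
/-- `u` is a factor (contiguous subword) of the infinite binary word `w : ℕ → Bool`. -/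
def IsFactor (w : ℕ → Bool) (u : List Bool) : Prop :=
  ∃ i : ℕ, u = (List.range u.length).map (fun j => w (i + j))

/-- Abelian equivalence of binary words: same number of `0`s (`false`) and of `1`s (`true`). -/
def AbelianEq (u v : List Bool) : Prop :=
  u.count false = v.count false ∧ u.count true = v.count true

namespace UPW

/-- Number of `true`s of `w` on `[a, b)`. -/
def cnt (w : ℕ → Bool) (a b : ℕ) : ℕ :=
  ((Finset.Ico a b).filter (fun i => w i = true)).card

lemma cnt_add (w : ℕ → Bool) {a b c : ℕ} (h1 : a ≤ b) (h2 : b ≤ c) :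
    cnt w a c = cnt w a b + cnt w b c := by
  unfold cnt
  rw [← Finset.Ico_union_Ico_eq_Ico h1 h2, Finset.filter_union,
    Finset.card_union_of_disjoint]
  exact Finset.disjoint_filter_filter (Finset.Ico_disjoint_Ico_consecutive a b c)

lemma cnt_one (w : ℕ → Bool) (a : ℕ) :
    cnt w a (a+1) = if w a = true then 1 else 0 := by
  unfold cnt
  rw [Nat.Ico_succ_singleton, Finset.filter_singleton]
  split <;> simp

lemma cnt_true (w : ℕ → Bool) {a : ℕ} (h : w a = true) : cnt w a (a+1) = 1 := by
  rw [cnt_one, if_pos h]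

lemma cnt_false (w : ℕ → Bool) {a : ℕ} (h : w a = false) : cnt w a (a+1) = 0 := by
  rw [cnt_one, if_neg (by simp [h])]

lemma cnt_mono (w : ℕ → Bool) {a b c : ℕ} (h : b ≤ c) : cnt w a b ≤ cnt w a c := by
  apply Finset.card_le_card
  exact Finset.filter_subset_filter _ (Finset.Ico_subset_Ico le_rfl h)

lemma cnt_zero (w : ℕ → Bool) {a b : ℕ} (h : ∀ x, a ≤ x → x < b → w x = false) :
    cnt w a b = 0 := by
  unfold cnt
  rw [Finset.card_eq_zero, Finset.filter_eq_empty_iff]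
  intro x hx
  rw [Finset.mem_Ico] at hx
  simp [h x hx.1 hx.2]

lemma cnt_nil (w : ℕ → Bool) {a b : ℕ} (h : b ≤ a) : cnt w a b = 0 := by
  unfold cnt
  rw [Finset.Ico_eq_empty (by omega)]
  simp

lemma cnt_shift (w : ℕ → Bool) (s a b : ℕ) :
    cnt (fun n => w (n + s)) a b = cnt w (a + s) (b + s) := by
  rcases le_or_gt a b with hab | hab
  · obtain ⟨k, rfl⟩ : ∃ k, b = a + k := ⟨b - a, by omega⟩
    induction k with
    | zero =>
      simp only [Nat.add_zero]
      rw [cnt_nil _ le_rfl, cnt_nil _ le_rfl]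
    | succ k ih =>
      have h1 : a ≤ a + k := by omega
      have h2 : a + k ≤ a + (k+1) := by omega
      have e1 : a + (k+1) = (a+k) + 1 := by omega
      have e2 : a + k + 1 + s = (a + k + s) + 1 := by omega
      rw [e1, e2, cnt_add _ h1 (by omega), cnt_add w (by omega : a + s ≤ a + k + s)
        (by omega : a + k + s ≤ (a + k + s) + 1), ih (by omega), cnt_one, cnt_one]
  · rw [cnt_nil _ (by omega), cnt_nil _ (by omega)]

/-- The key consequence of the abelian hypothesis, in counting form. -/
def KL (w : ℕ → Bool) : Prop :=
  ∀ i j l : ℕ, w i = w j → w (i + l) = w (j + l) →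
    cnt w i (i + (l+1)) = cnt w j (j + (l+1))

lemma cnt_eq_listcount (w : ℕ → Bool) : ∀ (L i : ℕ),
    ((List.range L).map (fun k => w (i + k))).count true = cnt w i (i + L) := by
  intro L
  induction L with
  | zero => intro i; simp [cnt_nil w le_rfl]
  | succ L ih =>
    intro i
    rw [List.range_succ, List.map_append, List.count_append,
      cnt_add w (by omega : i ≤ i + L) (by omega : i + L ≤ i + (L+1))]
    have e : i + (L + 1) = (i + L) + 1 := by omega
    rw [e, cnt_one, ih]
    congr 1
    simp [List.count_singleton']

lemma count_not (l : List Bool) : (l.map (fun x => !x)).count true = l.count false := by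
  induction l with
  | nil => simp
  | cons a l ih =>
    cases a <;> simp [List.count_cons, ih]

lemma window_isFactor (w : ℕ → Bool) (L i : ℕ) :
    IsFactor w ((List.range L).map (fun k => w (i + k))) := by
  exact ⟨i, by simp⟩

lemma window_head (w : ℕ → Bool) (l i : ℕ) :
    ((List.range (l+1)).map (fun k => w (i + k))).head? = some (w i) := by
  rw [List.range_succ_eq_map]
  simp

lemma window_last (w : ℕ → Bool) (l i : ℕ) :
    ((List.range (l+1)).map (fun k => w (i + k))).getLast? = some (w (i + l)) := by
  rw [List.range_succ, List.map_append]
  simp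

lemma KL_of_hyp (w : ℕ → Bool)
    (h : ∀ u v : List Bool, IsFactor w u → IsFactor w v → u.length = v.length →
      u.head? = v.head? → u.getLast? = v.getLast? → AbelianEq u v) : KL w := by
  intro i j l h1 h2
  have hab := h _ _ (window_isFactor w (l+1) i) (window_isFactor w (l+1) j)
    (by simp) (by rw [window_head, window_head, h1]) (by rw [window_last, window_last, h2])
  have := hab.2
  rwa [cnt_eq_listcount, cnt_eq_listcount] at this

lemma KL_of_hyp_neg (w : ℕ → Bool)
    (h : ∀ u v : List Bool, IsFactor w u → IsFactor w v → u.length = v.length →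
      u.head? = v.head? → u.getLast? = v.getLast? → AbelianEq u v) :
    KL (fun n => !w n) := by
  intro i j l h1 h2
  simp only at h1 h2
  have h1' : w i = w j := by cases hwi : w i <;> cases hwj : w j <;> simp_all
  have h2' : w (i + l) = w (j + l) := by
    cases hwi : w (i+l) <;> cases hwj : w (j+l) <;> simp_all
  have hab := h _ _ (window_isFactor w (l+1) i) (window_isFactor w (l+1) j)
    (by simp) (by rw [window_head, window_head, h1'])
    (by rw [window_last, window_last, h2'])
  have hc := hab.1
  have key : ∀ i : ℕ, ((List.range (l+1)).map (fun k => w (i + k))).count false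
      = cnt (fun n => !w n) i (i + (l+1)) := by
    intro i
    rw [← cnt_eq_listcount (fun n => !w n) (l+1) i]
    rw [← count_not]
    congr 1
    rw [List.map_map]
    rfl
  rw [key, key] at hc
  exact hc

end UPW
namespace UPW

variable {w : ℕ → Bool}

/-- Step relation: shifting a window of length `r` by one. -/
lemma step (w : ℕ → Bool) (a r : ℕ) :
    cnt w a (a+1) + cnt w (a+1) (a+1+r) = cnt w a (a+r) + cnt w (a+r) (a+r+1) := by
  rw [← cnt_add w (by omega : a ≤ a+1) (by omega : a+1 ≤ a+1+r),
      ← cnt_add w (by omega : a ≤ a+r) (by omega : a+r ≤ a+r+1)]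
  congr 1
  omega

/-- T2 : windows at positions with equal letters at both ends (same offsets). -/
lemma cnt_one' (w : ℕ → Bool) {a b : ℕ} (h : b = a + 1) :
    cnt w a b = if w a = true then 1 else 0 := by rw [h]; exact cnt_one w a

lemma cnt_true' (w : ℕ → Bool) {a b : ℕ} (h : b = a + 1) (hw : w a = true) :
    cnt w a b = 1 := by rw [h]; exact cnt_true w hw

lemma cnt_false' (w : ℕ → Bool) {a b : ℕ} (h : b = a + 1) (hw : w a = false) :
    cnt w a b = 0 := by rw [h]; exact cnt_false w hw

lemma T2 (hKL : KL w) (r n m : ℕ) (h1 : w n = w m) (h2 : w (n + r) = w (m + r)) :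
    cnt w n (n + r) = cnt w m (m + r) := by
  have := hKL n m r h1 h2
  rw [cnt_add w (by omega : n ≤ n + r) (by omega : n + r ≤ n + (r+1)),
      cnt_add w (by omega : m ≤ m + r) (by omega : m + r ≤ m + (r+1))] at this
  have e1 : n + (r+1) = (n+r) + 1 := by omega
  have e2 : m + (r+1) = (m+r) + 1 := by omega
  rw [e1, e2, cnt_one, cnt_one, h2] at this
  omega

/-- T1, ordered version : two matched windows (same letter at both ends of each). -/
lemma T1_le (hKL : KL w) (r n δ : ℕ) (h1 : w n = w (n + r)) (h2 : w (n + δ) = w (n + δ + r)) :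
    cnt w n (n + r) = cnt w (n + δ) (n + δ + r) := by
  have hkl := hKL n (n + r) δ h1 (by rw [h2]; congr 1; omega)
  have A : cnt w n (n + r + δ + 1) = cnt w n (n + r) + cnt w (n + r) (n + r + δ + 1) :=
    cnt_add w (by omega) (by omega)
  have B : cnt w n (n + r + δ + 1) = cnt w n (n + (δ+1)) + cnt w (n + (δ+1)) (n + r + δ + 1) :=
    cnt_add w (by omega) (by omega)
  have hkl' : cnt w n (n + (δ+1)) = cnt w (n + r) (n + r + δ + 1) := by
    rw [hkl, show n + r + (δ+1) = n+r+δ+1 from by omega]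
  have C : cnt w n (n + r) = cnt w (n + (δ+1)) (n + r + δ + 1) := by omega
  have S := step w (n + δ) r
  rw [cnt_one, cnt_one, h2] at S
  have C' : cnt w (n + (δ+1)) (n + r + δ + 1) = cnt w (n + δ + 1) (n + δ + 1 + r) := by
    congr 1 <;> omega
  have S' : cnt w (n + δ + 1) (n + δ + 1 + r) = cnt w (n + δ) (n + δ + r) := by omega
  omega

/-- T1 : any two matched windows of the same length have the same count. -/
lemma T1 (hKL : KL w) (r n m : ℕ) (h1 : w n = w (n + r)) (h2 : w m = w (m + r)) :
    cnt w n (n + r) = cnt w m (m + r) := by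
  rcases le_total n m with hle | hle
  · obtain ⟨δ, rfl⟩ : ∃ δ, m = n + δ := ⟨m - n, by omega⟩
    exact T1_le hKL r n δ h1 h2
  · obtain ⟨δ, rfl⟩ : ∃ δ, n = m + δ := ⟨n - m, by omega⟩
    exact (T1_le hKL r m δ h2 h1).symm

/-- No two adjacent `true`s. -/
def No11 (w : ℕ → Bool) : Prop := ∀ n, ¬(w n = true ∧ w (n+1) = true)

lemma no11_false_right (h : No11 w) {n : ℕ} (hn : w n = true) : w (n+1) = false := by
  have := h n
  cases hw : w (n+1)
  · rfl
  · exact absurd ⟨hn, hw⟩ this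

lemma no11_false_left (h : No11 w) {n : ℕ} (hn : w (n+1) = true) : w n = false := by
  have := h n
  cases hw : w n
  · rfl
  · exact absurd ⟨hw, hn⟩ this

/-- `Chain k v` : positions `v, v+2, …, v+2k` are all `true`. -/
def Chain (w : ℕ → Bool) (k v : ℕ) : Prop := ∀ i, i ≤ k → w (v + 2*i) = true

lemma chain_mono {k k' v : ℕ} (h : Chain w k' v) (hk : k ≤ k') : Chain w k v :=
  fun i hi => h i (le_trans hi hk)

lemma chain_cnt (h11 : No11 w) : ∀ {k v : ℕ}, Chain w k v → cnt w v (v + 2*k) = k := by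
  intro k
  induction k with
  | zero => intro v _; rw [cnt_nil w (by omega)]
  | succ k ih =>
    intro v hch
    have h1 : w (v + 2*k) = true := hch k (by omega)
    have h2 : w (v + 2*k + 1) = false := no11_false_right h11 h1
    rw [cnt_add w (by omega : v ≤ v + 2*k) (by omega : v + 2*k ≤ v + 2*(k+1)),
      ih (chain_mono hch (by omega))]
    have : cnt w (v + 2*k) (v + 2*(k+1)) = 1 := by
      rw [cnt_add w (by omega : v + 2*k ≤ v + 2*k + 1)
        (by omega : v + 2*k + 1 ≤ v + 2*(k+1)), cnt_true w h1]
      have e : v + 2*(k+1) = (v + 2*k + 1) + 1 := by omega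
      rw [e, cnt_false w h2]
    omega

lemma chain_cnt' (h11 : No11 w) {k v : ℕ} (h : Chain w k v) :
    cnt w v (v + 2*k + 1) = k + 1 := by
  rw [cnt_add w (by omega : v ≤ v + 2*k) (by omega), chain_cnt h11 h,
    cnt_true w (h k le_rfl)]

/-- Sparseness: with no `11`, a window of length `2k` has at most `k` trues. -/
lemma sparse (h11 : No11 w) : ∀ (k a : ℕ), cnt w a (a + 2*k) ≤ k := by
  intro k
  induction k with
  | zero => intro a; rw [cnt_nil w (by omega)]
  | succ k ih =>
    intro a
    rw [cnt_add w (by omega : a ≤ a + 2*k) (by omega : a + 2*k ≤ a + 2*(k+1)),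
      cnt_add w (by omega : a + 2*k ≤ a + 2*k + 1) (by omega : a + 2*k + 1 ≤ a + 2*(k+1))]
    have e : a + 2*(k+1) = (a + 2*k + 1) + 1 := by omega
    rw [e, cnt_one, cnt_one]
    have hb : (if w (a + 2*k) = true then 1 else 0) + (if w (a+2*k+1) = true then 1 else 0) ≤ 1 := by
      by_cases hw : w (a + 2*k) = true
      · rw [if_pos hw, if_neg (by simp [no11_false_right h11 hw])]
      · rw [if_neg hw]; split <;> omega
    have := ih a
    omega

/-- Extraction: a matched `true` pair at distance `2k` with count `k` gives a chain. -/
lemma extract (h11 : No11 w) : ∀ (k z : ℕ), w z = true → w (z + 2*k) = true →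
    cnt w z (z + 2*k) = k → Chain w k z := by
  intro k
  induction k with
  | zero => intro z hz _ _ i hi; interval_cases i; simpa using hz
  | succ k ih =>
    intro z hz hz' hcnt
    have h1 : w (z+1) = false := no11_false_right h11 hz
    have hd : cnt w (z+2) (z + 2*(k+1)) = k := by
      rw [cnt_add w (by omega : z ≤ z + 1) (by omega : z + 1 ≤ z + 2*(k+1)),
        cnt_add w (by omega : z + 1 ≤ z + 2) (by omega : z + 2 ≤ z + 2*(k+1)),
        cnt_true w hz] at hcnt
      rw [cnt_false' w (show (z:ℕ) + 2 = (z + 1) + 1 by omega) h1] at hcnt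
      omega
    by_cases hw2 : w (z + 2) = true
    · have hch : Chain w k (z+2) := by
        apply ih (z+2) hw2
        · have e : z + 2 + 2*k = z + 2*(k+1) := by omega
          rw [e]; exact hz'
        · have e : z + 2 + 2*k = z + 2*(k+1) := by omega
          rw [e]; exact hd
      intro i hi
      cases i with
      | zero => simpa using hz
      | succ i =>
        have := hch i (by omega)
        have e : z + 2*(i+1) = z + 2 + 2*i := by omega
        rw [e]; exact this
    · exfalso
      cases k with
      | zero =>
        have : w (z + 2) = true := by
          have e : z + 2*(0+1) = z + 2 := by omega
          rwa [e] at hz'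
        exact hw2 this
      | succ k' =>
        have hw2' : w (z+2) = false := by cases hw : w (z+2); rfl; exact absurd hw hw2
        have hd3 : cnt w (z+3) (z + 2*(k'+2)) = k' + 1 := by
          rw [cnt_add w (by omega : z + 2 ≤ z + 3) (by omega : z + 3 ≤ z + 2*(k'+2))] at hd
          rw [cnt_false' w (show (z:ℕ) + 3 = (z + 2) + 1 by omega) hw2'] at hd
          omega
        have hbig : cnt w (z+3) (z + 2*(k'+2) + 1) = k' + 2 := by
          rw [cnt_add w (by omega : z + 3 ≤ z + 2*(k'+2)) (by omega), hd3, cnt_true w hz']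
        have := sparse h11 (k'+1) (z+3)
        have e : z + 3 + 2*(k'+1) = z + 2*(k'+2) + 1 := by omega
        rw [e] at this
        omega

end UPW
namespace UPW

variable {w : ℕ → Bool}

def Per (w : ℕ → Bool) : Prop := ∃ N p : ℕ, 0 < p ∧ ∀ n, N ≤ n → w (n + p) = w n

def InfT (w : ℕ → Bool) : Prop := ∀ N, ∃ t, N ≤ t ∧ w t = true

section NextMachine

variable (hinf : InfT w)

noncomputable def nxt (x : ℕ) : ℕ := Nat.find (hinf (x+1))

lemma nxt_gt (x : ℕ) : x < nxt hinf x := (Nat.find_spec (hinf (x+1))).1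

lemma nxt_true (x : ℕ) : w (nxt hinf x) = true := (Nat.find_spec (hinf (x+1))).2

lemma nxt_min {x y : ℕ} (h1 : x < y) (h2 : y < nxt hinf x) : w y = false := by
  have hm := Nat.find_min (hinf (x+1)) h2
  cases hw : w y
  · rfl
  · exact absurd ⟨h1, hw⟩ hm

lemma nxt_le {x s : ℕ} (h1 : x < s) (h2 : w s = true) : nxt hinf s = s ∨ nxt hinf x ≤ s :=
  Or.inr (Nat.find_min' (hinf (x+1)) ⟨h1, h2⟩)

noncomputable def nth (i x : ℕ) : ℕ := (nxt hinf)^[i] x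

lemma nth_zero (x : ℕ) : nth hinf 0 x = x := rfl

lemma nth_succ (i x : ℕ) : nth hinf (i+1) x = nxt hinf (nth hinf i x) :=
  Function.iterate_succ_apply' _ i x

lemma nth_succ' (i x : ℕ) : nth hinf (i+1) x = nth hinf i (nxt hinf x) :=
  Function.iterate_succ_apply _ i x

lemma nth_add (i j x : ℕ) : nth hinf (i+j) x = nth hinf i (nth hinf j x) :=
  Function.iterate_add_apply _ i j x

lemma nth_true {x : ℕ} (hx : w x = true) (i : ℕ) : w (nth hinf i x) = true := by
  cases i with
  | zero => exact hx
  | succ i => rw [nth_succ]; exact nxt_true hinf _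

lemma nth_lt_nth {x : ℕ} : ∀ {i j : ℕ}, i < j → nth hinf i x < nth hinf j x := by
  have hstep : ∀ i, nth hinf i x < nth hinf (i+1) x := by
    intro i; rw [nth_succ]; exact nxt_gt hinf _
  intro i j hij
  induction j with
  | zero => omega
  | succ j ih =>
    rcases Nat.lt_succ_iff_lt_or_eq.mp hij with h | rfl
    · exact lt_trans (ih h) (hstep j)
    · exact hstep i

lemma nth_le_nth {x : ℕ} {i j : ℕ} (hij : i ≤ j) : nth hinf i x ≤ nth hinf j x := by
  rcases eq_or_lt_of_le hij with h | h
  · subst h; rfl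
  · exact le_of_lt (nth_lt_nth hinf h)

lemma cnt_nxt {x : ℕ} (hx : w x = true) : cnt w x (nxt hinf x) = 1 := by
  have h1 : x + 1 ≤ nxt hinf x := nxt_gt hinf x
  rw [cnt_add w (by omega : x ≤ x + 1) h1, cnt_true w hx, cnt_zero]
  intro y hy1 hy2
  exact nxt_min hinf (by omega) hy2

lemma le_nth (i x : ℕ) : x ≤ nth hinf i x := by
  have := nth_le_nth hinf (Nat.zero_le i) (x := x)
  rwa [nth_zero] at this

lemma cnt_nth {x : ℕ} (hx : w x = true) : ∀ i, cnt w x (nth hinf i x) = i := by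
  intro i
  induction i with
  | zero => exact cnt_nil w le_rfl
  | succ i ih =>
    rw [cnt_add w (le_nth hinf i x) (nth_le_nth hinf (by omega : i ≤ i + 1)), ih, nth_succ,
      cnt_nxt hinf (nth_true hinf hx i)]

lemma nth_eq_of_cnt {s e k : ℕ} (hs : w s = true) (he : 1 ≤ e)
    (hcnt : cnt w s (s + e) = k) (hse : w (s + e) = true) : nth hinf k s = s + e := by
  rcases lt_trichotomy (nth hinf k s) (s + e) with h | h | h
  · exfalso
    have ha : w (nth hinf k s) = true := nth_true hinf hs k
    have hge : s ≤ nth hinf k s := by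
      rcases Nat.eq_zero_or_pos k with hk | hk
      · subst hk; rfl
      · exact le_of_lt (nth_lt_nth hinf hk)
    have h1 : cnt w s (nth hinf k s + 1) = k + 1 := by
      rw [cnt_add w hge (by omega : nth hinf k s ≤ nth hinf k s + 1),
        cnt_nth hinf hs k, cnt_true w ha]
    have h2 : cnt w s (nth hinf k s + 1) ≤ cnt w s (s + e) := cnt_mono w (by omega)
    omega
  · exact h
  · exfalso
    have h1 : cnt w s (s + e + 1) = k + 1 := by
      rw [cnt_add w (by omega : s ≤ s + e) (by omega), hcnt, cnt_true w hse]
    have h2 : cnt w s (s + e + 1) ≤ cnt w s (nth hinf k s) := cnt_mono w (by omega)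
    rw [cnt_nth hinf hs k] at h2
    omega

lemma mem_nth {s : ℕ} (hs : w s = true) :
    ∀ d x, s - x = d → x < s → ∃ i, 1 ≤ i ∧ nth hinf i x = s := by
  intro d
  induction d using Nat.strong_induction_on with
  | _ d ih =>
    intro x hd hx
    have h1 : nxt hinf x ≤ s := Nat.find_min' (hinf (x+1)) ⟨by omega, hs⟩
    rcases eq_or_lt_of_le h1 with he | hl
    · refine ⟨1, le_rfl, ?_⟩
      rw [show (1:ℕ) = 0 + 1 from rfl, nth_succ, nth_zero, he]
    · have hxlt := nxt_gt hinf x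
      obtain ⟨i, hi1, hi2⟩ := ih (s - nxt hinf x) (by omega) (nxt hinf x) rfl hl
      exact ⟨i+1, by omega, by rw [nth_succ']; exact hi2⟩

end NextMachine

end UPW
namespace UPW

variable {w : ℕ → Bool}

lemma bool_eq_false {b : Bool} (h : b ≠ true) : b = false := by
  cases b; rfl; exact absurd rfl h

/-- Closure of trues under `+e` forces ultimate periodicity. -/
lemma closurePer (hKL : KL w) (hinf : InfT w) (e : ℕ) (he : 1 ≤ e)
    (hcl : ∀ t, 1 ≤ t → w t = true → w (t + e) = true) : Per w := by
  obtain ⟨t1, ht1ge, ht1⟩ := hinf 1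
  set k := cnt w t1 (t1 + e) with hk
  have hcnt : ∀ s, 1 ≤ s → w s = true → cnt w s (s + e) = k := by
    intro s hs1 hs
    exact T2 hKL e s t1 (hs.trans ht1.symm)
      (by rw [hcl s hs1 hs, hcl t1 ht1ge ht1])
  have hP : ∀ s, 1 ≤ s → w s = true → nth hinf k s = s + e := by
    intro s hs1 hs
    exact nth_eq_of_cnt hinf hs he (hcnt s hs1 hs) (hcl s hs1 hs)
  refine ⟨t1, e, by omega, ?_⟩
  intro n hn
  by_cases hwn : w n = true
  · rw [hcl n (by omega) hwn, hwn]
  · have hwn' : w n = false := bool_eq_false hwn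
    rw [hwn']
    by_contra hne
    have hne' : w (n + e) = true := by
      cases hw : w (n + e)
      · exact absurd hw hne
      · rfl
    -- largest true ≤ n
    have hex : ∃ d, w (n - d) = true := ⟨n - t1, by rwa [Nat.sub_sub_self hn]⟩
    have htT : w (n - Nat.find hex) = true := Nat.find_spec hex
    set d0 := Nat.find hex with hd0
    set t := n - d0 with hdt
    have hd0le : d0 ≤ n - t1 := Nat.find_min' hex (by rwa [Nat.sub_sub_self hn])
    have htge : t1 ≤ t := by omega
    have htn : t < n := by
      rcases Nat.lt_or_ge t n with h | h
      · exact h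
      · exfalso
        have : t = n := by omega
        rw [this] at htT
        rw [htT] at hwn'
        exact Bool.noConfusion hwn'
    obtain ⟨j, hj1, hj2⟩ := mem_nth hinf hne' (n + e - t) t rfl (by omega)
    have hPt := hP t (by omega) htT
    have hjk : k < j := by
      by_contra hle
      have h1 : nth hinf j t ≤ nth hinf k t := nth_le_nth hinf (by omega)
      rw [hj2, hPt] at h1
      omega
    obtain ⟨i, rfl⟩ : ∃ i, j = k + i := ⟨j - k, by omega⟩
    have hi1 : 1 ≤ i := by omega
    have hu : nth hinf (k + i) t = nth hinf k (nth hinf i t) := nth_add hinf k i t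
    have hut : w (nth hinf i t) = true := nth_true hinf htT i
    have hugt : t < nth hinf i t := nth_lt_nth hinf (by omega : 0 < i)
    have hPu := hP (nth hinf i t) (by omega) hut
    have heq : nth hinf i t + e = n + e := by rw [← hPu, ← hu, hj2]
    have : nth hinf i t = n := by omega
    rw [this, hwn'] at hut
    exact Bool.noConfusion hut

/-- Falses at distance 2 have a true in between (needs a true pair at distance 2). -/
lemma mid (hKL : KL w) (h2pair : ∃ u, w u = true ∧ w (u+2) = true)
    {f : ℕ} (hf : w f = false) (hf2 : w (f+2) = false) : w (f+1) = true := by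
  obtain ⟨u, hu, hu2⟩ := h2pair
  have hT := T1 hKL 2 f u (by rw [hf, hf2]) (by rw [hu, hu2])
  have hl : cnt w f (f+2) = cnt w (f+1) (f+2) := by
    rw [cnt_add w (by omega : f ≤ f+1) (by omega : f + 1 ≤ f + 2), cnt_false w hf,
      Nat.zero_add]
  have hr : 1 ≤ cnt w u (u+2) := by
    calc 1 = cnt w u (u+1) := (cnt_true w hu).symm
    _ ≤ cnt w u (u+2) := cnt_mono w (by omega)
  have hb : cnt w (f+1) (f+2) ≤ 1 := by
    rw [cnt_one' w (show (f:ℕ)+2 = (f+1)+1 by omega)]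
    split <;> omega
  have h1 : cnt w (f+1) (f+2) = 1 := by omega
  rw [cnt_one' w (show (f:ℕ)+2 = (f+1)+1 by omega)] at h1
  by_contra hff
  rw [if_neg hff] at h1
  exact Nat.noConfusion h1

lemma dense3 (hKL : KL w) (h2pair : ∃ u, w u = true ∧ w (u+2) = true) (n : ℕ) :
    w n = true ∨ w (n+1) = true ∨ w (n+2) = true := by
  by_cases h1 : w n = true
  · exact Or.inl h1
  by_cases h2 : w (n+2) = true
  · exact Or.inr (Or.inr h2)
  exact Or.inr (Or.inl (mid hKL h2pair (bool_eq_false h1) (bool_eq_false h2)))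

/-- If all positions `t0 + 2i` are true (no 11), the word is ultimately periodic. -/
lemma allTwos (h11 : No11 w) (t0 : ℕ) (h : ∀ i, w (t0 + 2*i) = true) : Per w := by
  refine ⟨t0, 2, by omega, ?_⟩
  intro n hn
  obtain ⟨d, rfl⟩ : ∃ d, n = t0 + d := ⟨n - t0, by omega⟩
  rcases Nat.even_or_odd d with ⟨i, hi⟩ | ⟨i, hi⟩
  · have h1 : w (t0 + d) = true := by
      rw [show t0 + d = t0 + 2*i from by omega]; exact h i
    have h2 : w (t0 + d + 2) = true := by
      rw [show t0 + d + 2 = t0 + 2*(i+1) from by omega]; exact h (i+1)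
    rw [h1, h2]
  · have h1 : w (t0 + d) = false := by
      rw [show t0 + d = t0 + 2*i + 1 from by omega]
      exact no11_false_right h11 (h i)
    have h2 : w (t0 + d + 2) = false := by
      rw [show t0 + d + 2 = t0 + 2*(i+1) + 1 from by omega]
      exact no11_false_right h11 (h (i+1))
    rw [h1, h2]

/-- Case: some distance `d+2` is not realized between trues. -/
lemma caseII (hKL : KL w) (h11 : No11 w) (hinf : InfT w) (d : ℕ)
    (hnd : ∀ u, ¬(w u = true ∧ w (u + (d+2)) = true)) : Per w := by
  have hndt : ∀ u, w u = true → w (u + (d+2)) = false := by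
    intro u hu
    cases hw : w (u + (d+2))
    · rfl
    · exact absurd ⟨hu, hw⟩ (hnd u)
  by_cases hα : ∃ t', w (t'+1) = true ∧ w (t' + (d+2)) = false
  · obtain ⟨t', ht'1, ht'D⟩ := hα
    have hm0 : w t' = false := no11_false_left h11 ht'1
    have hcl : ∀ s, w s = true → w (s + (d+3)) = true := by
      intro s hs
      by_contra hF
      have hF' : w (s + (d+3)) = false := bool_eq_false hF
      have hm' : w (s+1) = false := no11_false_right h11 hs
      have hm'D : w (s+1 + (d+2)) = false := by
        rw [show s+1+(d+2) = s+(d+3) from by omega]; exact hF'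
      have hT1 : cnt w t' (t' + (d+2)) = cnt w (s+1) (s+1+(d+2)) :=
        T1 hKL (d+2) t' (s+1) (by rw [hm0, ht'D]) (by rw [hm', hm'D])
      have hs1 := step w t' (d+2)
      rw [cnt_false w hm0, cnt_false w ht'D] at hs1
      have hs2 := step w s (d+2)
      rw [cnt_true w hs, cnt_false w (hndt s hs)] at hs2
      have hT2 : cnt w (t'+1) (t'+1+(d+2)) = cnt w s (s+(d+2)) :=
        T2 hKL (d+2) (t'+1) s (by rw [ht'1, hs])
          (by rw [hndt (t'+1) ht'1, hndt s hs])
      omega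
    exact closurePer hKL hinf (d+3) (by omega) (fun t _ ht => hcl t ht)
  · push_neg at hα
    have hcl : ∀ s, 1 ≤ s → w s = true → w (s + (d+1)) = true := by
      intro s hs1 hs
      obtain ⟨t', rfl⟩ : ∃ t', s = t' + 1 := ⟨s - 1, by omega⟩
      have hne := hα t' hs
      cases hw : w (t' + (d+2))
      · exact absurd hw hne
      · rw [show t'+1+(d+1) = t' + (d+2) from by omega]; exact hw
    exact closurePer hKL hinf (d+1) (by omega) hcl

end UPW
namespace UPW

variable {w : ℕ → Bool}

/-- The final clash: a word with an `M`-chain at position `≥ 1` but no `(M+1)`-chain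
anywhere cannot satisfy the hypothesis unless ultimately periodic. -/
lemma finalClash (hKL : KL w) (h11 : No11 w) (hinf : InfT w) (hnp : ¬ Per w)
    (M : ℕ) (hMex : ∃ v, 1 ≤ v ∧ Chain w M v) (hMtop : ∀ v, ¬ Chain w (M+1) v) : False := by
  by_cases hreal : ∃ z, w z = true ∧ w (z + (2*M+2)) = true
  · obtain ⟨z, hz, hz'⟩ := hreal
    obtain ⟨v, hv1, hchv⟩ := hMex
    obtain ⟨v', rfl⟩ : ∃ v', v = v' + 1 := ⟨v - 1, by omega⟩
    have hvt : w (v'+1) = true := by simpa using hchv 0 (by omega)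
    have hvl : w v' = false := no11_false_left h11 hvt
    have hvr : w (v'+1 + 2*M + 1) = false := no11_false_right h11 (hchv M le_rfl)
    have hcv : cnt w v' (v' + (2*M+2)) = M + 1 := by
      rw [show v' + (2*M+2) = (v'+1) + 2*M + 1 from by omega,
        cnt_add w (show v' ≤ v'+1 by omega) (show v'+1 ≤ v'+1+2*M+1 by omega),
        cnt_false w hvl, chain_cnt' h11 hchv, Nat.zero_add]
    have hT := T1 hKL (2*M+2) v' z
      (by rw [hvl, show v' + (2*M+2) = v'+1+2*M+1 from by omega, hvr])
      (by rw [hz, hz'])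
    rw [hcv] at hT
    have hch2 : Chain w (M+1) z := by
      apply extract h11 (M+1) z hz
      · rw [show z + 2*(M+1) = z + (2*M+2) from by omega]; exact hz'
      · rw [show z + 2*(M+1) = z + (2*M+2) from by omega]; exact hT.symm
    exact hMtop z hch2
  · have hnd : ∀ u, ¬(w u = true ∧ w (u + (2*M+2)) = true) := fun u hu => hreal ⟨u, hu⟩
    exact hnp (caseII hKL h11 hinf (2*M) hnd)

/-- Main lemma for words with no `11`. -/
lemma mainNo11 (hKL : KL w) (h11 : No11 w) (hnp : ¬ Per w) : False := by
  classical
  -- infinitely many trues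
  have hinf : InfT w := by
    intro N
    by_contra hni
    push_neg at hni
    exact hnp ⟨N, 1, by omega, fun n hn => by
      rw [bool_eq_false (hni n hn), bool_eq_false (hni (n+1) (by omega))]⟩
  -- a true pair at distance 2, or caseII finishes
  by_cases h2p : ∃ u, w u = true ∧ w (u+2) = true
  swap
  · have hnd : ∀ u, ¬(w u = true ∧ w (u + (0+2)) = true) := by
      intro u hu
      exact h2p ⟨u, hu.1, by have := hu.2; rwa [show u + (0+2) = u + 2 from by omega] at this⟩
    exact hnp (caseII hKL h11 hinf 0 hnd)
  -- chains bounded or unbounded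
  by_cases hUB : ∀ k, ∃ v, Chain w k v
  · -- unbounded chains: build a 3-gap followed by a maximal 2-run, clash with a long chain
    have hAT : ¬ ∀ t, w t = true → w (t+2) = true := by
      intro hAT
      obtain ⟨t0, _, ht0⟩ := hinf 0
      have hall : ∀ i, w (t0 + 2*i) = true := by
        intro i
        induction i with
        | zero => simpa using ht0
        | succ i ih =>
          have := hAT _ ih
          rw [show t0+2*(i+1) = (t0+2*i)+2 from by omega]
          exact this
      exact hnp (allTwos h11 t0 hall)
    push_neg at hAT
    obtain ⟨t, ht, ht2⟩ := hAT
    have ht2' : w (t+2) = false := bool_eq_false ht2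
    have ht1 : w (t+1) = false := no11_false_right h11 ht
    have ht3 : w (t+3) = true := by
      rcases dense3 hKL h2p (t+1) with h | h | h
      · rw [ht1] at h; exact Bool.noConfusion h
      · rw [show t+1+1 = t+2 from by omega, ht2'] at h; exact Bool.noConfusion h
      · rwa [show t+1+2 = t+3 from by omega] at h
    have hexF : ∃ i, ¬ w (t+3+2*i) = true := by
      by_contra hAll
      push_neg at hAll
      exact hnp (allTwos h11 (t+3) hAll)
    have hF : ¬ w (t+3+2*(Nat.find hexF)) = true := Nat.find_spec hexF
    have hFpos : 1 ≤ Nat.find hexF := by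
      rcases Nat.eq_zero_or_pos (Nat.find hexF) with h | h
      · exfalso; apply hF; rw [h]; simpa using ht3
      · exact h
    obtain ⟨j, hjF⟩ : ∃ j, Nat.find hexF = j + 1 := ⟨Nat.find hexF - 1, by omega⟩
    have hch : Chain w j (t+3) := by
      intro i hi
      have hlt : i < Nat.find hexF := by omega
      have := Nat.find_min hexF hlt
      push_neg at this
      exact this
    have hFf : w (t+3+2*j+2) = false := by
      rw [hjF] at hF
      rw [show t+3+2*j+2 = t+3+2*(j+1) from by omega]
      exact bool_eq_false hF
    have h4f : w (t+3+2*j+1) = false := no11_false_right h11 (hch j le_rfl)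
    have h6 : w (t+6+2*j) = true := by
      rcases dense3 hKL h2p (t+3+2*j+1) with h | h | h
      · rw [h4f] at h; exact Bool.noConfusion h
      · rw [show t+3+2*j+1+1 = t+3+2*j+2 from by omega, hFf] at h; exact Bool.noConfusion h
      · rwa [show t+3+2*j+1+2 = t+6+2*j from by omega] at h
    have hc1 : cnt w t (t+3) = 1 := by
      rw [cnt_add w (show t ≤ t+1 by omega) (show t+1 ≤ t+3 by omega), cnt_true w ht,
        cnt_add w (show t+1 ≤ t+2 by omega) (show t+2 ≤ t+3 by omega),
        cnt_false' w (show (t:ℕ)+2 = (t+1)+1 by omega) ht1,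
        cnt_false' w (show (t:ℕ)+3 = (t+2)+1 by omega) ht2']
    have hc2 : cnt w (t+3) (t+3+2*j) = j := chain_cnt h11 hch
    have hc3 : cnt w (t+3+2*j) (t+6+2*j) = 1 := by
      rw [cnt_add w (show t+3+2*j ≤ t+3+2*j+1 by omega) (show t+3+2*j+1 ≤ t+6+2*j by omega),
        cnt_true w (hch j le_rfl),
        cnt_add w (show t+3+2*j+1 ≤ t+3+2*j+2 by omega) (show t+3+2*j+2 ≤ t+6+2*j by omega),
        cnt_false' w (show t+3+2*j+2 = (t+3+2*j+1)+1 by omega) h4f,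
        cnt_false' w (show t+6+2*j = (t+3+2*j+2)+1 by omega) hFf]
    have hcc : cnt w t (t + (2*j+6)) = j + 2 := by
      rw [show t + (2*j+6) = t+6+2*j from by omega,
        cnt_add w (show t ≤ t+3 by omega) (show t+3 ≤ t+6+2*j by omega),
        cnt_add w (show t+3 ≤ t+3+2*j by omega) (show t+3+2*j ≤ t+6+2*j by omega),
        hc1, hc2, hc3]
      omega
    obtain ⟨u, hchu⟩ := hUB (j+3)
    have hcu : cnt w u (u + 2*(j+3)) = j + 3 := chain_cnt h11 hchu
    have hu0 : w u = true := by simpa using hchu 0 (by omega)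
    have hue : w (u + (2*j+6)) = true := by
      rw [show u + (2*j+6) = u + 2*(j+3) from by omega]
      exact hchu (j+3) le_rfl
    have hT := T1 hKL (2*j+6) t u
      (by rw [ht, show t + (2*j+6) = t+6+2*j from by omega, h6])
      (by rw [hu0, hue])
    rw [hcc, show u + (2*j+6) = u + 2*(j+3) from by omega, hcu] at hT
    omega
  · -- chains bounded
    push_neg at hUB
    obtain ⟨K, hK⟩ := hUB
    by_cases hm1 : ∀ N, ∃ v, N ≤ v ∧ (w v = true ∧ w (v+2) = true)
    · -- infinitely many 2-pairs: find greatest chain length occurring infinitely often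
      have hP1 : ∀ N, ∃ v, N ≤ v ∧ Chain w 1 v := by
        intro N
        obtain ⟨v, hv1, hv2, hv3⟩ := hm1 N
        refine ⟨v, hv1, fun i hi => ?_⟩
        interval_cases i
        · simpa using hv2
        · rw [show v+2*1 = v+2 from by omega]; exact hv3
      have hbound : ∃ M, 1 ≤ M ∧ (∀ N, ∃ v, N ≤ v ∧ Chain w M v) ∧
          ¬(∀ N, ∃ v, N ≤ v ∧ Chain w (M+1) v) := by
        by_contra hno
        push_neg at hno
        have hall : ∀ k, 1 ≤ k → (∀ N, ∃ v, N ≤ v ∧ Chain w k v) := by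
          intro k hk
          induction k with
          | zero => omega
          | succ k ih =>
            rcases Nat.eq_zero_or_pos k with h0 | hpos
            · subst h0; exact hP1
            · exact hno k hpos (ih hpos)
        have hKpos : 1 ≤ K := by
          by_contra h0
          have hK0 : K = 0 := by omega
          subst hK0
          obtain ⟨v, _, hv⟩ := hinf 0
          refine hK v (fun i hi => ?_)
          have hi0 : i = 0 := by omega
          subst hi0
          simpa using hv
        obtain ⟨v, _, hv⟩ := hall K hKpos 0
        exact hK v hv
      obtain ⟨M, hM1, hPM, hF2⟩ := hbound
      push_neg at hF2
      obtain ⟨N0, hN0⟩ := hF2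

      -- pass to the tail word W = w(· + N0)
      have hKL' : KL (fun n => w (n + N0)) := by
        intro i j l h1 h2
        simp only at h1 h2
        have h2' : w (i + N0 + l) = w (j + N0 + l) := by
          rw [show i+N0+l = i+l+N0 from by omega, show j+N0+l = j+l+N0 from by omega]
          exact h2
        have hres := hKL (i+N0) (j+N0) l h1 h2'
        rw [cnt_shift w N0 i (i+(l+1)), cnt_shift w N0 j (j+(l+1)),
          show i+(l+1)+N0 = i+N0+(l+1) from by omega,
          show j+(l+1)+N0 = j+N0+(l+1) from by omega]
        exact hres
      have h11' : No11 (fun n => w (n + N0)) := by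
        intro n hn
        simp only at hn
        exact h11 (n + N0) ⟨hn.1, by
          have := hn.2
          rwa [show n+1+N0 = n+N0+1 from by omega] at this⟩
      have hinf' : InfT (fun n => w (n + N0)) := by
        intro N
        obtain ⟨s, hs1, hs2⟩ := hinf (N + N0)
        refine ⟨s - N0, by omega, ?_⟩
        show w (s - N0 + N0) = true
        rwa [show s - N0 + N0 = s from by omega]
      have hnp' : ¬ Per (fun n => w (n + N0)) := by
        rintro ⟨N, p, hp, hper⟩
        apply hnp
        refine ⟨N + N0, p, hp, fun n hn => ?_⟩
        have := hper (n - N0) (by omega)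
        simp only at this
        rw [show n - N0 + p + N0 = n + p from by omega,
          show n - N0 + N0 = n from by omega] at this
        exact this
      obtain ⟨v, hv, hchv⟩ := hPM (N0 + 1)
      apply finalClash hKL' h11' hinf' hnp' M
      · refine ⟨v - N0, by omega, fun i hi => ?_⟩
        show w (v - N0 + 2*i + N0) = true
        rw [show v - N0 + 2*i + N0 = v + 2*i from by omega]
        exact hchv i hi
      · intro p hp
        apply hN0 (p + N0) (by omega)
        intro i hi
        have := hp i hi
        simp only at this
        show w (p + N0 + 2*i) = true
        rw [show p + N0 + 2*i = p + 2*i + N0 from by omega]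
        exact this
    · -- only finitely many 2-pairs: eventually all gaps are 3, hence periodic
      push_neg at hm1
      obtain ⟨N, hN⟩ := hm1
      have hstep3 : ∀ s, N ≤ s → w s = true → w (s+3) = true := by
        intro s hsN hs
        have h2 : w (s+2) = false := by
          cases hw : w (s+2)
          · rfl
          · exact absurd hw (hN s hsN hs)
        have h1 : w (s+1) = false := no11_false_right h11 hs
        rcases dense3 hKL h2p (s+1) with h | h | h
        · rw [h1] at h; exact Bool.noConfusion h
        · rw [show s+1+1 = s+2 from by omega, h2] at h; exact Bool.noConfusion h
        · rwa [show s+1+2 = s+3 from by omega] at h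
      apply hnp
      refine ⟨N + 2, 3, by omega, ?_⟩
      intro n hn
      obtain ⟨m, rfl⟩ : ∃ m, n = m + 2 := ⟨n - 2, by omega⟩
      have hmN : N ≤ m := by omega
      by_cases hw : w (m+2) = true
      · rw [hw, hstep3 (m+2) (by omega) hw]
      · have hw' : w (m+2) = false := bool_eq_false hw
        rw [hw']
        by_contra hne
        have h5 : w (m+2+3) = true := by
          cases hww : w (m+2+3)
          · exact absurd hww hne
          · rfl
        rcases dense3 hKL h2p m with h | h | h
        · have h3 := hstep3 m hmN h
          have h6 := hstep3 (m+3) (by omega) h3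
          exact h11 (m+5) ⟨by rwa [show m+5 = m+2+3 from by omega],
            by rwa [show m+3+3 = m+5+1 from by omega] at h6⟩
        · have h4 := hstep3 (m+1) (by omega) h
          exact h11 (m+4) ⟨by rwa [show m+4 = m+1+3 from by omega],
            by rwa [show m+2+3 = m+4+1 from by omega] at h5⟩
        · rw [hw'] at h; exact Bool.noConfusion h

end UPW
namespace UPW

variable {w : ℕ → Bool}

/-- The word cannot contain both `11` and `00`. -/
lemma eleven_zerozero (hKL : KL w) {a b : ℕ} (ha : w a = true) (ha1 : w (a+1) = true)
    (hb : w b = false) (hb1 : w (b+1) = false) : False := by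
  rcases lt_trichotomy a b with h | h | h
  · obtain ⟨δ, rfl⟩ : ∃ δ, b = a + δ := ⟨b - a, by omega⟩
    have hδ : 1 ≤ δ := by omega
    have hk := hKL a (a+1) δ (ha.trans ha1.symm)
      (by rw [hb, show a+1+δ = a+δ+1 from by omega, hb1])
    have d1 : cnt w a (a+(δ+1)) = cnt w a (a+1) + cnt w (a+1) (a+(δ+1)) :=
      cnt_add w (by omega) (by omega)
    have d2 : cnt w (a+1) (a+1+(δ+1)) = cnt w (a+1) (a+(δ+1)) + cnt w (a+(δ+1)) (a+1+(δ+1)) :=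
      cnt_add w (by omega) (by omega)
    have e1 : cnt w a (a+1) = 1 := cnt_true w ha
    have e2 : cnt w (a+(δ+1)) (a+1+(δ+1)) = 0 :=
      cnt_false' w (show a+1+(δ+1) = (a+(δ+1))+1 from by omega)
        (by rw [show a+(δ+1) = a+δ+1 from by omega]; exact hb1)
    omega
  · rw [h, hb] at ha; exact Bool.noConfusion ha
  · obtain ⟨δ, rfl⟩ : ∃ δ, a = b + δ := ⟨a - b, by omega⟩
    have hδ : 1 ≤ δ := by omega
    have hk := hKL b (b+1) δ (hb.trans hb1.symm)
      (by rw [ha, show b+1+δ = b+δ+1 from by omega, ha1])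
    have d1 : cnt w b (b+(δ+1)) = cnt w b (b+1) + cnt w (b+1) (b+(δ+1)) :=
      cnt_add w (by omega) (by omega)
    have d2 : cnt w (b+1) (b+1+(δ+1)) = cnt w (b+1) (b+(δ+1)) + cnt w (b+(δ+1)) (b+1+(δ+1)) :=
      cnt_add w (by omega) (by omega)
    have e1 : cnt w b (b+1) = 0 := cnt_false w hb
    have e2 : cnt w (b+(δ+1)) (b+1+(δ+1)) = 1 :=
      cnt_true' w (show b+1+(δ+1) = (b+(δ+1))+1 from by omega)
        (by rw [show b+(δ+1) = b+δ+1 from by omega]; exact ha1)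
    omega

end UPW

theorem ultimately_periodic_of_first_last_letter_forces_abelian (w : ℕ → Bool)
    (h : ∀ u v : List Bool, IsFactor w u → IsFactor w v → u.length = v.length →
      u.head? = v.head? → u.getLast? = v.getLast? → AbelianEq u v) :
    ∃ N p : ℕ, 0 < p ∧ ∀ n, N ≤ n → w (n + p) = w n := by
  by_contra hnp
  have hnp' : ¬ UPW.Per w := hnp
  by_cases h11ex : ∃ a, w a = true ∧ w (a+1) = true
  · obtain ⟨a, ha, ha1⟩ := h11ex
    have hKLn := UPW.KL_of_hyp_neg w h
    have h11n : UPW.No11 (fun n => !w n) := by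
      intro n hn
      simp only [Bool.not_eq_true'] at hn
      exact UPW.eleven_zerozero (UPW.KL_of_hyp w h) ha ha1 hn.1 hn.2
    have hnpn : ¬ UPW.Per (fun n => !w n) := by
      rintro ⟨N, p, hp, hper⟩
      apply hnp'
      refine ⟨N, p, hp, fun n hn => ?_⟩
      have hthis := hper n hn
      simp only at hthis
      cases h1 : w (n+p) <;> cases h2 : w n <;> simp [h1, h2] at hthis ⊢
    exact (UPW.mainNo11 hKLn h11n hnpn).elim
  · have h11 : UPW.No11 w := fun n hn => h11ex ⟨n, hn⟩
    exact (UPW.mainNo11 (UPW.KL_of_hyp w h) h11 hnp').elim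
end

section
/- Let α ∈ (0,1) be irrational with continued fraction convergent denominators (q_t). Define λ(α) = limsup_{t→∞} 1/(q_t ‖q_t α‖), where ‖x‖ is the distance of x to the nearest integer. Then λ(α) ≥ √5. -/
/-- Distance of a real number to the nearest integer. -/
noncomputable def distNearestInt (x : ℝ) : ℝ := min (Int.fract x) (1 - Int.fract x)

/-- The `t`-th partial quotient of the continued fraction expansion of `α`,
obtained by iterating the Gauss map `y ↦ 1 / fract y`. -/
noncomputable def partialQuotient (α : ℝ) (t : ℕ) : ℤ :=
  ⌊(fun y : ℝ => (Int.fract y)⁻¹)^[t] α⌋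

/-- The denominators `q_t` of the convergents of the continued fraction of `α`,
given by `q_0 = 1`, `q_1 = a_1`, `q_{t+2} = a_{t+2} q_{t+1} + q_t`. -/
noncomputable def convDen (α : ℝ) : ℕ → ℤ
  | 0 => 1
  | 1 => partialQuotient α 1
  | (t + 2) => partialQuotient α (t + 2) * convDen α (t + 1) + convDen α t

/-- The Lagrange constant `λ(α) = limsup_t 1 / (q_t ‖q_t α‖)`, as an extended real. -/
noncomputable def lagrangeConstant (α : ℝ) : EReal :=
  Filter.limsup
    (fun t => ((1 / ((convDen α t : ℝ) * distNearestInt ((convDen α t : ℝ) * α)) : ℝ) : EReal))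
    Filter.atTop

/-!
Write `ζ_t` for the complete quotients (the orbit of `α` under the Gauss map `y ↦ 1 / fract y`)
and `δ_t = ∏_{i ≤ t} ζ_{i+1}⁻¹` (`approxError α t`). Then `q_t α - p_t = (-1)^t δ_t` and
`q_{t+1} δ_t + q_t δ_{t+1} = 1`, which give the classical lower bound
`1 / (q_{t+1} ‖q_{t+1} α‖) ≥ ζ_{t+2} + q_t / q_{t+1}`.
If two consecutive such quantities are at most `√5`, then the ratio `q_{t+2} / q_{t+1}` is at most
the golden ratio `φ`; since it is rational it is even `< φ`, and then the recursion
`q_{t+3} / q_{t+2} = a_{t+3} + q_{t+1} / q_{t+2} > 1 + φ⁻¹ = φ` shows that three consecutive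
quantities cannot all be below `√5`.
-/

open Finset Real goldenRatio

noncomputable def completeQuotient (α : ℝ) (t : ℕ) : ℝ :=
  (fun y : ℝ => (Int.fract y)⁻¹)^[t] α

noncomputable def convNum (α : ℝ) : ℕ → ℤ
  | 0 => partialQuotient α 0
  | 1 => partialQuotient α 1 * partialQuotient α 0 + 1
  | (t + 2) => partialQuotient α (t + 2) * convNum α (t + 1) + convNum α t

noncomputable def approxError (α : ℝ) (t : ℕ) : ℝ :=
  ∏ i ∈ range (t + 1), (completeQuotient α (i + 1))⁻¹

theorem distNearestInt_le_abs_sub (x : ℝ) (n : ℤ) : distNearestInt x ≤ |x - n| := by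
  rcases le_or_gt n ⌊x⌋ with h | h
  · have : (n : ℝ) ≤ ⌊x⌋ := by exact_mod_cast h
    calc distNearestInt x ≤ x - ⌊x⌋ := min_le_left _ _
      _ ≤ x - n := by linarith
      _ ≤ |x - n| := le_abs_self _
  · have : (⌊x⌋ : ℝ) + 1 ≤ n := by exact_mod_cast h
    calc distNearestInt x ≤ 1 - (x - ⌊x⌋) := min_le_right _ _
      _ ≤ -(x - n) := by linarith
      _ ≤ |x - n| := neg_le_abs _

theorem Irrational.distNearestInt_pos {x : ℝ} (hx : Irrational x) : 0 < distNearestInt x :=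
  lt_min (Int.fract_pos.2 (hx.ne_int _)) (sub_pos.2 (Int.fract_lt_one x))

theorem le_goldenRatio_of_add_inv_le_sqrt_five {x y : ℝ} (hx : 0 < x) (hy : 0 < y)
    (h₁ : x + y⁻¹ ≤ √5) (h₂ : x⁻¹ + y ≤ √5) : y ≤ φ := by
  have h5 : √5 ^ 2 = 5 := sq_sqrt (by norm_num)
  have hprod : 1 ≤ (√5 - y⁻¹) * (√5 - y) :=
    calc (1 : ℝ) = x * x⁻¹ := (mul_inv_cancel₀ hx.ne').symm
      _ ≤ (√5 - y⁻¹) * (√5 - y) := by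
        gcongr <;> linarith [inv_pos.2 hx]
  have hsum : y + y⁻¹ ≤ √5 := by
    have : (√5 - y⁻¹) * (√5 - y) = 6 - √5 * (y + y⁻¹) := by
      linear_combination h5 + inv_mul_cancel₀ hy.ne'
    nlinarith [sqrt_nonneg 5]
  -- `y² - √5 y + 1 = (y - φ) (y + ψ)` and `φ + ψ = 1`
  have hquad : (y - φ) * (y + ψ) ≤ 0 := by
    have : y * (y + y⁻¹) = y ^ 2 + 1 := by field_simp
    nlinarith [goldenRatio_sub_goldenConj, goldenRatio_mul_goldenConj]
  nlinarith [goldenRatio_add_goldenConj, goldenConj_neg]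

namespace completeQuotient

variable {α : ℝ}

theorem succ (t : ℕ) : completeQuotient α (t + 1) = (Int.fract (completeQuotient α t))⁻¹ :=
  Function.iterate_succ_apply' _ _ _

theorem eq_partialQuotient_add_inv (t : ℕ) :
    completeQuotient α t = partialQuotient α t + (completeQuotient α (t + 1))⁻¹ := by
  rw [succ, inv_inv, partialQuotient, ← completeQuotient, Int.floor_add_fract]

theorem irrational (hα : Irrational α) (t : ℕ) : Irrational (completeQuotient α t) := by
  induction t with
  | zero => exact hα
  | succ t ih => rw [succ, Int.fract]; exact (ih.sub_intCast _).inv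

theorem one_lt_succ (hα : Irrational α) (t : ℕ) : 1 < completeQuotient α (t + 1) := by
  rw [succ]
  exact (one_lt_inv₀ (Int.fract_pos.2 ((irrational hα t).ne_int _))).2 (Int.fract_lt_one _)

theorem pos_succ (hα : Irrational α) (t : ℕ) : 0 < completeQuotient α (t + 1) :=
  one_pos.trans (one_lt_succ hα t)

end completeQuotient

section Convergents

variable {α : ℝ}

open completeQuotient

theorem one_le_partialQuotient_succ (hα : Irrational α) (t : ℕ) :
    1 ≤ partialQuotient α (t + 1) :=
  Int.le_floor.2 (by exact_mod_cast (one_lt_succ hα t).le)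

theorem convDen_add_two (t : ℕ) :
    (convDen α (t + 2) : ℝ)
      = partialQuotient α (t + 2) * convDen α (t + 1) + convDen α t := by
  simp [convDen]

theorem convNum_add_two (t : ℕ) :
    (convNum α (t + 2) : ℝ)
      = partialQuotient α (t + 2) * convNum α (t + 1) + convNum α t := by
  simp [convNum]

theorem one_le_convDen (hα : Irrational α) (t : ℕ) : 1 ≤ convDen α t := by
  induction t using Nat.twoStepInduction with
  | zero => rfl
  | one => exact one_le_partialQuotient_succ hα 0
  | more t h₀ h₁ =>
    have := one_le_partialQuotient_succ hα (t + 1)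
    rw [convDen]
    nlinarith

theorem convDen_pos (hα : Irrational α) (t : ℕ) : (0 : ℝ) < convDen α t := by
  exact_mod_cast one_le_convDen hα t

theorem convDen_add_two_div (hα : Irrational α) (t : ℕ) :
    (convDen α (t + 2) : ℝ) / convDen α (t + 1)
      = partialQuotient α (t + 2) + (convDen α t : ℝ) / convDen α (t + 1) := by
  rw [convDen_add_two, add_div, mul_div_cancel_right₀ _ (convDen_pos hα (t + 1)).ne']

theorem approxError_succ (t : ℕ) :
    approxError α (t + 1) = approxError α t * (completeQuotient α (t + 2))⁻¹ :=
  prod_range_succ _ _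

theorem approxError_zero : approxError α 0 = (completeQuotient α 1)⁻¹ := by
  simp [approxError]

theorem approxError_one :
    approxError α 1 = (completeQuotient α 1)⁻¹ * (completeQuotient α 2)⁻¹ := by
  simp [approxError, prod_range_succ, mul_comm]

theorem approxError_pos (hα : Irrational α) (t : ℕ) : 0 < approxError α t :=
  prod_pos fun i _ => inv_pos.2 (pos_succ hα i)

theorem approxError_eq_add (hα : Irrational α) (t : ℕ) :
    approxError α t
      = partialQuotient α (t + 2) * approxError α (t + 1) + approxError α (t + 2) := by
  have hζ : completeQuotient α (t + 2)
      = partialQuotient α (t + 2) + (completeQuotient α (t + 3))⁻¹ :=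
    eq_partialQuotient_add_inv (t + 2)
  have h₁ := approxError_succ (α := α) t
  have h₂ : approxError α (t + 2)
      = approxError α (t + 1) * (completeQuotient α (t + 3))⁻¹ :=
    approxError_succ (t + 1)
  have hinv := mul_inv_cancel₀ (pos_succ hα (t + 1)).ne'
  linear_combination -h₂ + approxError α (t + 1) * hζ - completeQuotient α (t + 2) * h₁
    - approxError α t * hinv

theorem convDen_succ_mul_approxError_add (hα : Irrational α) (t : ℕ) :
    convDen α (t + 1) * approxError α t + convDen α t * approxError α (t + 1) = 1 := by
  induction t with
  | zero =>
    have h₁ : completeQuotient α 1 = partialQuotient α 1 + (completeQuotient α 2)⁻¹ :=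
      eq_partialQuotient_add_inv 1
    have hinv := inv_mul_cancel₀ (pos_succ hα 0).ne'
    rw [approxError_zero, approxError_one]
    simp only [convDen, Int.cast_one, one_mul]
    linear_combination -(completeQuotient α 1)⁻¹ * h₁ + hinv
  | succ t ih =>
    rw [convDen_add_two]
    linear_combination ih - (convDen α (t + 1) : ℝ) * approxError_eq_add hα t

theorem convDen_mul_sub_convNum (hα : Irrational α) (t : ℕ) :
    convDen α t * α - convNum α t = (-1) ^ t * approxError α t := by
  have h₀ : α = partialQuotient α 0 + (completeQuotient α 1)⁻¹ :=
    eq_partialQuotient_add_inv 0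
  induction t using Nat.twoStepInduction with
  | zero =>
    rw [approxError_zero]
    simp only [convDen, convNum, pow_zero, Int.cast_one, one_mul]
    linear_combination h₀
  | one =>
    have h₁ : completeQuotient α 1 = partialQuotient α 1 + (completeQuotient α 2)⁻¹ :=
      eq_partialQuotient_add_inv 1
    have hinv := mul_inv_cancel₀ (pos_succ hα 0).ne'
    rw [approxError_one]
    simp only [convDen, convNum]
    push_cast
    linear_combination
      (partialQuotient α 1 : ℝ) * h₀ - (completeQuotient α 1)⁻¹ * h₁ + hinv
  | more t ih₀ ih₁ =>
    rw [convDen_add_two, convNum_add_two]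
    linear_combination (partialQuotient α (t + 2) : ℝ) * ih₁ + ih₀
      + (-1) ^ t * approxError_eq_add hα t

theorem distNearestInt_convDen_mul_le (hα : Irrational α) (t : ℕ) :
    distNearestInt (convDen α t * α) ≤ approxError α t := by
  have := distNearestInt_le_abs_sub (convDen α t * α) (convNum α t)
  rwa [convDen_mul_sub_convNum hα, abs_mul, abs_pow, abs_neg, abs_one, one_pow, one_mul,
    abs_of_pos (approxError_pos hα t)] at this

theorem completeQuotient_add_div_le (hα : Irrational α) (t : ℕ) :
    completeQuotient α (t + 2) + (convDen α t : ℝ) / convDen α (t + 1)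
      ≤ 1 / (convDen α (t + 1) * distNearestInt (convDen α (t + 1) * α)) := by
  have hq := convDen_pos hα (t + 1)
  have hne := (pos_succ hα (t + 1)).ne'
  have hD := approxError_pos hα t
  have hexact : completeQuotient α (t + 2) + (convDen α t : ℝ) / convDen α (t + 1)
      = 1 / (convDen α (t + 1) * approxError α (t + 1)) := by
    rw [← convDen_succ_mul_approxError_add hα t, approxError_succ]
    field_simp
  rw [hexact]
  have hirr := hα.intCast_mul (Int.cast_ne_zero.1 hq.ne')
  gcongr
  · exact mul_pos hq hirr.distNearestInt_pos
  · exact distNearestInt_convDen_mul_le hα (t + 1)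

end Convergents

section Hurwitz

variable {α : ℝ}

open completeQuotient

theorem convDen_div_le_goldenRatio (hα : Irrational α) (t : ℕ)
    (h₀ : completeQuotient α (t + 2) + (convDen α t : ℝ) / convDen α (t + 1) ≤ √5)
    (h₁ : completeQuotient α (t + 3) + (convDen α (t + 1) : ℝ) / convDen α (t + 2)
      ≤ √5) :
    (convDen α (t + 2) : ℝ) / convDen α (t + 1) ≤ φ := by
  have hζ : completeQuotient α (t + 2)
      = partialQuotient α (t + 2) + (completeQuotient α (t + 3))⁻¹ :=
    eq_partialQuotient_add_inv (t + 2)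
  refine le_goldenRatio_of_add_inv_le_sqrt_five (pos_succ hα (t + 2))
    (div_pos (convDen_pos hα _) (convDen_pos hα _)) (by rwa [inv_div]) ?_
  linarith [convDen_add_two_div hα t]

theorem convDen_div_ne_goldenRatio (t s : ℕ) : (convDen α t : ℝ) / convDen α s ≠ φ :=
  fun h => Int.not_irrational _ ((h ▸ goldenRatio_irrational).of_div_intCast _)

theorem exists_sqrt_five_le_completeQuotient_add_div (hα : Irrational α) (t : ℕ) :
    ∃ s ≥ t,
      √5 ≤ completeQuotient α (s + 2) + (convDen α s : ℝ) / convDen α (s + 1) := by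
  by_contra! h
  have hu₁ := convDen_div_le_goldenRatio hα t (h t le_rfl).le (h (t + 1) (by omega)).le
  have hu₂ := convDen_div_le_goldenRatio hα (t + 1) (h (t + 1) (by omega)).le
    (h (t + 2) (by omega)).le
  have hlt := lt_of_le_of_ne hu₁ (convDen_div_ne_goldenRatio _ _)
  have hinv : φ⁻¹ < (convDen α (t + 1) : ℝ) / convDen α (t + 2) := by
    rw [← inv_div]
    exact inv_strictAnti₀ (div_pos (convDen_pos hα _) (convDen_pos hα _)) hlt
  have ha : (1 : ℝ) ≤ partialQuotient α (t + 3) := by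
    exact_mod_cast one_le_partialQuotient_succ hα (t + 2)
  have hφ : φ = 1 + φ⁻¹ := by
    rw [inv_goldenRatio]; linarith [goldenRatio_add_goldenConj]
  linarith [convDen_add_two_div hα (t + 1)]

end Hurwitz

theorem hurwitz_lagrange_general (α : ℝ) (hα : Irrational α) :
    (Real.sqrt 5 : EReal) ≤ lagrangeConstant α := by
  refine Filter.le_limsup_of_frequently_le' (Filter.frequently_atTop.2 fun N => ?_)
  obtain ⟨s, hs, h⟩ := exists_sqrt_five_le_completeQuotient_add_div hα N
  exact ⟨s + 1, by omega, EReal.coe_le_coe_iff.2 (h.trans (completeQuotient_add_div_le hα s))⟩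

theorem hurwitz_lagrange (α : ℝ) (hα : Irrational α) (hmem : α ∈ Set.Ioo (0:ℝ) 1) :
    (Real.sqrt 5 : EReal) ≤ lagrangeConstant α :=
  hurwitz_lagrange_general α hα
end

section
/- Let α ∈ (0,1) be irrational and ℓ ≥ 2 an integer. The set of values max L_β(ℓ), where β ranges over irrationals whose continued fraction expansion eventually agrees with that of α (equivalent numbers), and max L_β(ℓ) is the maximal length of the intervals into which the points 0, {-β}, …, {-ℓβ} divide the unit circle, is dense in the interval (1/(ℓ+1), 1). -/
/-- The points `{-j α}` for `0 ≤ j ≤ ℓ`, viewed in `[0,1)` (the unit circle). -/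
def circlePoints (α : ℝ) (ℓ : ℕ) : Set ℝ :=
  {x | ∃ j : ℕ, j ≤ ℓ ∧ x = Int.fract (-(j : ℝ) * α)}

/-- The length of the arc starting at `x` and going in the positive direction
until the next point of `P` (on the circle `ℝ/ℤ`). -/
noncomputable def arcLen (P : Set ℝ) (x : ℝ) : ℝ :=
  sInf {d : ℝ | 0 < d ∧ Int.fract (x + d) ∈ P}

/-- The maximal length of the arcs into which the points of `P` divide the circle. -/
noncomputable def maxArc (P : Set ℝ) : ℝ := sSup (arcLen P '' P)

/-- Two numbers are equivalent if their continued fraction expansions eventually agree. -/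
def CFEquiv (α β : ℝ) : Prop :=
  ∃ N M : ℕ, ∀ i : ℕ, partialQuotient α (N + i) = partialQuotient β (M + i)

/-!
Below `1/(ℓ+1)` the picture is explicit: if `(ℓ+1)β ≤ 1`, the points are `0` and `1 - jβ`
(`1 ≤ j ≤ ℓ`), so the arcs are `ℓ` arcs of length `β` and one arc `[0, 1 - ℓβ]`, and the maximal
arc is `1 - ℓβ`. As `β` runs over `(0, 1/(ℓ+1))` this sweeps out `(1/(ℓ+1), 1)` continuously, so it
suffices that the numbers equivalent to `α` are dense in `(0,1)`. For that, prepend to the tail of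
`α` the first `2k` partial quotients of a target `x`: the resulting number is equivalent to `α`, and
since every composition of two inverse branches `y ↦ 1/(n + y)` of the Gauss map is a
`1/4`-contraction on `[0, ∞)`, it lies within `4⁻ᵏ` of `x`.
-/

open Set

noncomputable def gaussMap (y : ℝ) : ℝ := (Int.fract y)⁻¹

noncomputable def gaussBranch (n : ℕ+) (y : ℝ) : ℝ := ((n : ℝ) + y)⁻¹

lemma partialQuotient_eq_floor_gaussMap_iterate (x : ℝ) (t : ℕ) :
    partialQuotient x t = ⌊gaussMap^[t] x⌋ := rfl

section GaussBranch

variable {y : ℝ}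

lemma PNat.one_le_cast (n : ℕ+) : (1 : ℝ) ≤ n := Nat.one_le_cast.mpr n.pos

lemma gaussBranch_pos (n : ℕ+) (hy : 0 ≤ y) : 0 < gaussBranch n y :=
  inv_pos.mpr (by linarith [PNat.one_le_cast n])

lemma gaussBranch_lt_one (n : ℕ+) (hy : 0 < y) : gaussBranch n y < 1 :=
  inv_lt_one_of_one_lt₀ (by linarith [PNat.one_le_cast n])

lemma Irrational.gaussBranch (n : ℕ+) (hy : Irrational y) : Irrational (gaussBranch n y) :=
  (hy.natCast_add n).inv

lemma gaussMap_natCast_add (n : ℕ) (y : ℝ) : gaussMap (n + y) = gaussMap y := by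
  rw [gaussMap, Int.fract_natCast_add, gaussMap]

lemma gaussMap_gaussBranch (n : ℕ+) (hy : 0 < y) : gaussMap (gaussBranch n y) = n + y := by
  rw [gaussMap, Int.fract_eq_self.mpr ⟨(gaussBranch_pos n hy.le).le, gaussBranch_lt_one n hy⟩,
    gaussBranch, inv_inv]

lemma gaussMap_iterate_gaussBranch (n : ℕ+) (hy : 0 < y) (m : ℕ) :
    gaussMap^[m + 2] (gaussBranch n y) = gaussMap^[m + 1] y := by
  rw [Function.iterate_succ_apply, gaussMap_gaussBranch n hy, Function.iterate_succ_apply,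
    gaussMap_natCast_add, Function.iterate_succ_apply]

lemma exists_gaussBranch_eq {x : ℝ} (hx : Irrational x) (hx01 : x ∈ Ioo (0 : ℝ) 1) :
    ∃ n : ℕ+, ∃ z, Irrational z ∧ z ∈ Ioo (0 : ℝ) 1 ∧ gaussBranch n z = x := by
  have hfloor : 0 < ⌊x⁻¹⌋ := Int.floor_pos.mpr (one_le_inv₀ hx01.1 |>.mpr hx01.2.le)
  have hz : Irrational (Int.fract x⁻¹) := by
    simpa only [Int.fract] using hx.inv.sub_intCast ⌊x⁻¹⌋
  refine ⟨⟨⌊x⁻¹⌋.toNat, by omega⟩, Int.fract x⁻¹, hz,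
    ⟨(Int.fract_nonneg _).lt_of_ne (fun h => hz (h ▸ ⟨0, by simp⟩)), Int.fract_lt_one _⟩, ?_⟩
  have hcast : ((⌊x⁻¹⌋.toNat : ℕ) : ℝ) = ⌊x⁻¹⌋ := by exact_mod_cast Int.toNat_of_nonneg hfloor.le
  simp only [gaussBranch, PNat.mk_coe]
  rw [hcast, Int.floor_add_fract, inv_inv]

end GaussBranch

noncomputable def gaussBranchPair (p : ℕ+ × ℕ+) (y : ℝ) : ℝ := gaussBranch p.1 (gaussBranch p.2 y)

/-- `prependPairs [(a₁, b₁), …, (aₖ, bₖ)] y = [0; a₁, b₁, …, aₖ, bₖ + y]`. -/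
noncomputable def prependPairs (L : List (ℕ+ × ℕ+)) (y : ℝ) : ℝ := L.foldr gaussBranchPair y

lemma abs_gaussBranchPair_sub_le (p : ℕ+ × ℕ+) {w w' : ℝ} (hw : 0 ≤ w) (hw' : 0 ≤ w') :
    |gaussBranchPair p w - gaussBranchPair p w'| ≤ |w - w'| / 4 := by
  obtain ⟨a, b⟩ := p
  have ha := PNat.one_le_cast a
  have hb := PNat.one_le_cast b
  -- `1 / (a + 1 / (b + w)) = (b + w) / P` with `P = a (b + w) + 1 ≥ 2`
  set P : ℝ := a * (b + w) + 1
  set P' : ℝ := a * (b + w') + 1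
  have hP : 2 ≤ P := by nlinarith
  have hP' : 2 ≤ P' := by nlinarith
  have hdiff : gaussBranchPair (a, b) w - gaussBranchPair (a, b) w' = (w - w') / (P * P') := by
    simp only [gaussBranchPair, gaussBranch, P, P']
    field_simp
    ring
  rw [hdiff, abs_div, abs_of_pos (show 0 < P * P' by nlinarith)]
  exact div_le_div_of_nonneg_left (abs_nonneg _) (by norm_num) (by nlinarith)

section PrependPairs

variable {L : List (ℕ+ × ℕ+)} {y : ℝ}

lemma prependPairs_pos (hy : 0 < y) : 0 < prependPairs L y := by
  induction L with
  | nil => exact hy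
  | cons p L ih => exact gaussBranch_pos _ (gaussBranch_pos _ ih.le).le

lemma Irrational.prependPairs (hy : Irrational y) : Irrational (prependPairs L y) := by
  induction L with
  | nil => exact hy
  | cons p L ih => exact (ih.gaussBranch _).gaussBranch _

lemma gaussMap_iterate_prependPairs (hy : 0 < y) (m : ℕ) :
    gaussMap^[m + 2 * L.length + 1] (prependPairs L y) = gaussMap^[m + 1] y := by
  induction L generalizing m with
  | nil => rfl
  | cons p L ih =>
    have hL := prependPairs_pos (L := L) hy
    calc gaussMap^[m + 2 * (p :: L).length + 1] (prependPairs (p :: L) y)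
        = gaussMap^[(m + 2 * L.length + 1) + 2]
            (gaussBranch p.1 (gaussBranch p.2 (prependPairs L y))) := by
          rw [List.length_cons]; rfl
      _ = gaussMap^[m + 2 * L.length + 1] (prependPairs L y) := by
          rw [gaussMap_iterate_gaussBranch _ (gaussBranch_pos _ hL.le),
            gaussMap_iterate_gaussBranch _ hL]
      _ = gaussMap^[m + 1] y := ih m

lemma cfEquiv_prependPairs (L : List (ℕ+ × ℕ+)) (hy : 0 < y) : CFEquiv (prependPairs L y) y :=
  ⟨2 * L.length + 1, 1, fun i => by
    simp only [partialQuotient_eq_floor_gaussMap_iterate]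
    rw [show 2 * L.length + 1 + i = i + 2 * L.length + 1 by ring, add_comm 1 i,
      gaussMap_iterate_prependPairs hy]⟩

lemma abs_prependPairs_sub_le {u v : ℝ} (hu : 0 < u) (hv : 0 < v) :
    |prependPairs L u - prependPairs L v| ≤ (1 / 4) ^ L.length * |u - v| := by
  induction L with
  | nil => simp [prependPairs]
  | cons p L ih =>
    have hLu := (prependPairs_pos (L := L) hu).le
    have hLv := (prependPairs_pos (L := L) hv).le
    calc |prependPairs (p :: L) u - prependPairs (p :: L) v|
        ≤ |prependPairs L u - prependPairs L v| / 4 := abs_gaussBranchPair_sub_le p hLu hLv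
      _ ≤ (1 / 4) ^ (p :: L).length * |u - v| := by
          rw [List.length_cons, pow_succ]; linarith

lemma exists_prependPairs_eq (k : ℕ) {x : ℝ} (hx : Irrational x) (hx01 : x ∈ Ioo (0 : ℝ) 1) :
    ∃ L : List (ℕ+ × ℕ+), L.length = k ∧
      ∃ y, Irrational y ∧ y ∈ Ioo (0 : ℝ) 1 ∧ prependPairs L y = x := by
  induction k generalizing x with
  | zero => exact ⟨[], rfl, x, hx, hx01, rfl⟩
  | succ k ih =>
    obtain ⟨a, z, hz, hz01, rfl⟩ := exists_gaussBranch_eq hx hx01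
    obtain ⟨b, w, hw, hw01, rfl⟩ := exists_gaussBranch_eq hz hz01
    obtain ⟨L, rfl, y, hy, hy01, rfl⟩ := ih hw hw01
    exact ⟨(a, b) :: L, rfl, y, hy, hy01, rfl⟩

end PrependPairs

lemma exists_cfEquiv_near {α x : ℝ} (hα : Irrational α) (hα01 : α ∈ Ioo (0 : ℝ) 1)
    (hx : Irrational x) (hx01 : x ∈ Ioo (0 : ℝ) 1) (k : ℕ) :
    ∃ β, Irrational β ∧ CFEquiv β α ∧ |β - x| ≤ (1 / 4) ^ k := by
  obtain ⟨L, rfl, y, -, hy01, rfl⟩ := exists_prependPairs_eq k hx hx01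
  refine ⟨prependPairs L α, hα.prependPairs, cfEquiv_prependPairs L hα01.1, ?_⟩
  have hαy : |α - y| ≤ 1 :=
    (abs_sub_lt_iff.mpr ⟨by linarith [hα01.2, hy01.1], by linarith [hα01.1, hy01.2]⟩).le
  calc |prependPairs L α - prependPairs L y| ≤ (1 / 4) ^ L.length * |α - y| :=
        abs_prependPairs_sub_le hα01.1 hy01.1
    _ ≤ (1 / 4) ^ L.length := mul_le_of_le_one_right (by positivity) hαy

lemma Ioo_subset_closure_cfEquiv {α : ℝ} (hα : Irrational α) (hα01 : α ∈ Ioo (0 : ℝ) 1) :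
    Ioo (0 : ℝ) 1 ⊆ closure {β | Irrational β ∧ CFEquiv β α} := by
  refine (dense_irrational.open_subset_closure_inter isOpen_Ioo).trans
    (closure_minimal ?_ isClosed_closure)
  rintro x ⟨hx01, hx⟩
  refine Metric.mem_closure_iff.mpr fun ε hε => ?_
  obtain ⟨k, hk⟩ := exists_pow_lt_of_lt_one hε (by norm_num : (1 / 4 : ℝ) < 1)
  obtain ⟨β, hβ, hβα, hβx⟩ := exists_cfEquiv_near hα hα01 hx hx01 k
  exact ⟨β, ⟨hβ, hβα⟩, by rw [Real.dist_eq, abs_sub_comm]; linarith⟩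

lemma arcLen_le {P : Set ℝ} {x d : ℝ} (hd : 0 < d) (h : Int.fract (x + d) ∈ P) :
    arcLen P x ≤ d :=
  csInf_le ⟨0, fun _ he => he.1.le⟩ ⟨hd, h⟩

lemma Int.fract_neg_of_mem_Ioo {y : ℝ} (hy : y ∈ Ioo (0 : ℝ) 1) : Int.fract (-y) = 1 - y := by
  have hfract : Int.fract y = y := Int.fract_eq_self.mpr ⟨hy.1.le, hy.2⟩
  rw [Int.fract_neg (by rw [hfract]; exact hy.1.ne'), hfract]

section CirclePoints

variable {β : ℝ} {ℓ : ℕ}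

lemma arcLen_circlePoints_zero (hβ : 0 < β) (h : ((ℓ : ℝ) + 1) * β ≤ 1) :
    arcLen (circlePoints β ℓ) 0 = 1 - ℓ * β := by
  refine IsLeast.csInf_eq ⟨⟨by nlinarith, ℓ, le_rfl, ?_⟩, ?_⟩
  · rw [zero_add, show 1 - (ℓ : ℝ) * β = -(ℓ : ℝ) * β + 1 by ring, Int.fract_add_one]
  rintro d ⟨hd, j, hj, hdj⟩
  by_contra! hlt
  rw [zero_add, Int.fract_eq_self.mpr ⟨hd.le, by nlinarith⟩] at hdj
  rcases j.eq_zero_or_pos with rfl | hj0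
  · simp only [CharP.cast_eq_zero, neg_zero, zero_mul, Int.fract_zero] at hdj
    linarith
  · have hjℓ : (j : ℝ) * β ≤ ℓ * β := by gcongr
    have hj1 : (1 : ℝ) ≤ j := by exact_mod_cast hj0
    rw [neg_mul, Int.fract_neg_of_mem_Ioo ⟨by positivity, by nlinarith⟩] at hdj
    linarith

lemma arcLen_circlePoints_succ_le (hβ : 0 < β) {j : ℕ} (hj : j + 1 ≤ ℓ) :
    arcLen (circlePoints β ℓ) (Int.fract (-((j + 1 : ℕ) : ℝ) * β)) ≤ β := by
  refine arcLen_le hβ ⟨j, by omega, Int.fract_eq_fract.mpr ⟨-⌊-((j + 1 : ℕ) : ℝ) * β⌋, ?_⟩⟩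
  rw [Int.fract]
  push_cast
  ring

lemma maxArc_circlePoints (hβ : 0 < β) (h : ((ℓ : ℝ) + 1) * β ≤ 1) :
    maxArc (circlePoints β ℓ) = 1 - ℓ * β := by
  have hzero := arcLen_circlePoints_zero hβ h
  refine IsGreatest.csSup_eq ⟨⟨0, ⟨0, Nat.zero_le _, by simp⟩, hzero⟩, ?_⟩
  rintro _ ⟨_, ⟨j, hj, rfl⟩, rfl⟩
  rcases j with _ | j
  · simp [hzero]
  · exact (arcLen_circlePoints_succ_le hβ hj).trans (by linarith)

end CirclePoints

theorem maxArc_dense_over_equivalent_slopes_general (α : ℝ) (hα : Irrational α)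
    (hmem : α ∈ Set.Ioo (0:ℝ) 1) (ℓ : ℕ) :
    Set.Ioo (1 / ((ℓ : ℝ) + 1)) 1 ⊆
      closure {y : ℝ | ∃ β : ℝ, Irrational β ∧ CFEquiv β α ∧ y = maxArc (circlePoints β ℓ)} := by
  rintro t ⟨ht₀, ht₁⟩
  have hℓ : (0 : ℝ) < ℓ := by
    have h := ht₀.trans ht₁
    rw [div_lt_one (by positivity)] at h
    linarith
  set U := Ioo (0 : ℝ) (1 / ((ℓ : ℝ) + 1))
  have hU : ∀ β ∈ U, ((ℓ : ℝ) + 1) * β ≤ 1 := fun β hβ =>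
    ((lt_div_iff₀' (by positivity)).mp hβ.2).le
  have hβ₀ : (1 - t) / ℓ ∈ U := by
    refine ⟨div_pos (by linarith) hℓ, ?_⟩
    rw [div_lt_iff₀ (by positivity)] at ht₀
    rw [div_lt_div_iff₀ hℓ (by positivity)]
    linarith
  have hclosure : (1 - t) / ℓ ∈ closure (U ∩ {β | Irrational β ∧ CFEquiv β α}) :=
    isOpen_Ioo.inter_closure ⟨hβ₀, Ioo_subset_closure_cfEquiv hα hmem
      ⟨hβ₀.1, hβ₀.2.trans_le (div_le_one_of_le₀ (by linarith) (by positivity))⟩⟩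
  have ht : 1 - ℓ * ((1 - t) / ℓ) = t := by field_simp; ring
  have himage := image_closure_subset_closure_image
    (by fun_prop : Continuous fun β : ℝ => 1 - ℓ * β) ⟨_, hclosure, rfl⟩
  beta_reduce at himage
  rw [ht] at himage
  refine closure_mono ?_ himage
  rintro _ ⟨β, ⟨hβU, hβ, hβα⟩, rfl⟩
  exact ⟨β, hβ, hβα, (maxArc_circlePoints hβU.1 (hU β hβU)).symm⟩

theorem maxArc_dense_over_equivalent_slopes (α : ℝ) (hα : Irrational α)
    (hmem : α ∈ Set.Ioo (0:ℝ) 1) (ℓ : ℕ) (hℓ : 2 ≤ ℓ) :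
    Set.Ioo (1 / ((ℓ : ℝ) + 1)) 1 ⊆
      closure {y : ℝ | ∃ β : ℝ, Irrational β ∧ CFEquiv β α ∧ y = maxArc (circlePoints β ℓ)} :=
  maxArc_dense_over_equivalent_slopes_general α hα hmem ℓ
end

section
/- Let s be a Sturmian word of irrational slope α ∈ (0,1), i.e., s(n) = ⌊(n+1)α + x⌋ − ⌊nα + x⌋ for some x. Then s is balanced: for any two factors u, v of s of equal length, ||u|_1 − |v|_1| ≤ 1. -/
/-- The `n`-th letter of the Sturmian word of slope `α` and intercept `x`:
`s(n) = ⌊(n+1)α + x⌋ − ⌊nα + x⌋`. -/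
noncomputable def sturmianLetter (α x : ℝ) (n : ℕ) : ℤ :=
  ⌊((n : ℝ) + 1) * α + x⌋ - ⌊(n : ℝ) * α + x⌋

/-- `u` is a factor of the Sturmian word of slope `α` and intercept `x`. -/
def IsSturmianFactor (α x : ℝ) (u : List ℤ) : Prop :=
  ∃ i : ℕ, u = (List.range u.length).map (fun j => sturmianLetter α x (i + j))

lemma letter01 (α x : ℝ) (hmem : α ∈ Set.Ioo (0:ℝ) 1) (n : ℕ) :
    sturmianLetter α x n = 0 ∨ sturmianLetter α x n = 1 := by
  obtain ⟨h0, h1⟩ := hmem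
  unfold sturmianLetter
  have hle : ⌊(n : ℝ) * α + x⌋ ≤ ⌊((n : ℝ) + 1) * α + x⌋ := by
    apply Int.floor_le_floor; nlinarith
  have hlt : ⌊((n : ℝ) + 1) * α + x⌋ < ⌊(n : ℝ) * α + x⌋ + 2 := by
    apply Int.floor_lt.mpr
    push_cast
    have := Int.lt_floor_add_one ((n : ℝ) * α + x)
    nlinarith
  omega

lemma count_eq_sum (l : List ℤ) (h : ∀ a ∈ l, a = 0 ∨ a = 1) :
    (l.count 1 : ℤ) = l.sum := by
  induction l with
  | nil => simp
  | cons a t ih =>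
    have ht := ih (fun b hb => h b (List.mem_cons_of_mem _ hb))
    rcases h a (by simp) with h0 | h1 <;> subst_vars <;>
      simp [List.count_cons, ← ht] <;> ring

lemma sum_window (α x : ℝ) (i n : ℕ) :
    ((List.range n).map (fun j => sturmianLetter α x (i + j))).sum
      = ⌊((i : ℝ) * α + x) + (n : ℝ) * α⌋ - ⌊(i : ℝ) * α + x⌋ := by
  induction n with
  | zero => simp
  | succ n ih =>
    rw [List.range_succ, List.map_append, List.sum_append, ih]
    simp only [List.map_cons, List.map_nil, List.sum_cons, List.sum_nil, add_zero]
    unfold sturmianLetter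
    have e1 : ((i : ℝ) * α + x) + ((n : ℕ) + 1 : ℕ) * α = (((i + n : ℕ) : ℝ) + 1) * α + x := by
      push_cast; ring
    have e2 : ((i : ℝ) * α + x) + (n : ℝ) * α = ((i + n : ℕ) : ℝ) * α + x := by
      push_cast; ring
    rw [e1, ← e2]
    push_cast
    ring

lemma window_bounds (a c : ℝ) : ⌊c⌋ ≤ ⌊a + c⌋ - ⌊a⌋ ∧ ⌊a + c⌋ - ⌊a⌋ ≤ ⌊c⌋ + 1 := by
  constructor
  · have : (⌊a⌋ + ⌊c⌋ : ℤ) ≤ ⌊a + c⌋ := by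
      apply Int.le_floor.mpr; push_cast; linarith [Int.floor_le a, Int.floor_le c]
    omega
  · have : ⌊a + c⌋ < ⌊a⌋ + ⌊c⌋ + 2 := by
      apply Int.floor_lt.mpr; push_cast
      linarith [Int.lt_floor_add_one a, Int.lt_floor_add_one c]
    omega

theorem sturmian_balanced (α : ℝ) (hα : Irrational α) (hmem : α ∈ Set.Ioo (0:ℝ) 1)
    (x : ℝ) (u v : List ℤ) (hu : IsSturmianFactor α x u) (hv : IsSturmianFactor α x v)
    (hlen : u.length = v.length) :
    |(u.count 1 : ℤ) - (v.count 1 : ℤ)| ≤ 1 := by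
  obtain ⟨i, hi⟩ := hu
  obtain ⟨k, hk⟩ := hv
  set n := u.length with hn
  have hcu : (u.count 1 : ℤ) = ⌊((i : ℝ) * α + x) + (n : ℝ) * α⌋ - ⌊(i : ℝ) * α + x⌋ := by
    rw [count_eq_sum u (by
      intro a ha
      rw [hi] at ha
      obtain ⟨j, _, rfl⟩ := List.mem_map.mp ha
      exact letter01 α x hmem _)]
    conv_lhs => rw [hi]
    exact sum_window α x i n
  have hcv : (v.count 1 : ℤ) = ⌊((k : ℝ) * α + x) + (n : ℝ) * α⌋ - ⌊(k : ℝ) * α + x⌋ := by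
    rw [count_eq_sum v (by
      intro a ha
      rw [hk] at ha
      obtain ⟨j, _, rfl⟩ := List.mem_map.mp ha
      exact letter01 α x hmem _)]
    conv_lhs => rw [hk]
    rw [← hlen]
    exact sum_window α x k n
  rw [hcu, hcv]
  obtain ⟨b1, b2⟩ := window_bounds ((i : ℝ) * α + x) ((n : ℝ) * α)
  obtain ⟨b3, b4⟩ := window_bounds ((k : ℝ) * α + x) ((n : ℝ) * α)
  rw [abs_le]
  omega
end

section
/- For every real λ ≥ 0 there exists an irrational α ∈ (0,1) such that limsup_{m→∞} E(m)/m = λ, where E(m) is the maximal integer exponent n such that some w^n with |w| = m is a factor of a Sturmian word of slope α. -/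
/-- `u` is a factor of some Sturmian word of slope `α`. -/
def IsSlopeFactor (α : ℝ) (u : List ℤ) : Prop :=
  ∃ x : ℝ, ∃ i : ℕ, u = (List.range u.length).map (fun j => sturmianLetter α x (i + j))

/-- `E α m` is the maximal integer exponent `n` such that `w^n` is a factor of a
Sturmian word of slope `α` for some word `w` of length `m`. -/
noncomputable def maxPowerExponent (α : ℝ) (m : ℕ) : ℕ :=
  sSup {n : ℕ | ∃ w : List ℤ, w.length = m ∧ IsSlopeFactor α (List.replicate n w).flatten}

/-!
Take `α = [0; a₁, a₂, …]` with `a_{t+1} ≈ λ q_t`, where `q_t` are the convergent denominators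
(a recursive choice, since `q_t` only depends on `a₁, …, a_t`). Let `θ_t = ‖q_t α‖`, the
distance from `q_t α` to the nearest integer.

For `0 < r < q_{t+1}` one has `‖r α‖ ≥ θ_t` (best approximation), and by marching with steps
`q_t α - p_t = ±θ_t` the orbit of any point under rotation by `α` comes within `θ_t` of an integer,
on either side, in fewer than `q_{t+1} + 3 q_t + q_{t-1}` steps. If `m < q_{t+1}`, then
`‖m α‖ ≥ θ_t` leaves an interval of length `θ_t` on which letters at distance `m` differ, so a
factor of period `m` is shorter than `q_{t+1} + O(q_t) + m`; hence `E(m) ≤ λ m + O(1)`.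

Conversely, for `0 < r < q_{t+1}` shifting `r` by `q_t` moves `r α` by `±θ_t ≤ ‖r α‖` without
reaching an integer (`α` is irrational), so it changes no `⌊r α⌋`: the characteristic word has
period `q_t` on positions `1, …, q_{t+1} - 1`, and `E(q_t) ≥ a_{t+1} ≥ λ q_t`.
-/

open Filter List Topology

namespace Sturmian

theorem exists_flatten_replicate_eq_map_range_iff {β : Type*} (f : ℕ → β) (m n : ℕ) :
    (∃ w : List β, w.length = m ∧ (replicate n w).flatten = (range (n * m)).map f) ↔
      ∀ j, j + m < n * m → f (j + m) = f j := by
  constructor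
  · rintro ⟨w, rfl, hw⟩ j hj
    obtain ⟨n, rfl⟩ : ∃ k, n = k + 1 := Nat.exists_eq_add_one_of_ne_zero (by rintro rfl; simp at hj)
    have hlen : (replicate n w).flatten.length + w.length = (n + 1) * w.length := by
      simp [add_one_mul]
    have hget : ∀ i, i < (n + 1) * w.length → (replicate (n + 1) w).flatten[i]? = some (f i) := by
      intro i hi
      rw [hw, getElem?_map, getElem?_range hi]
      rfl
    apply Option.some_injective
    rw [← hget _ hj, ← hget j (by omega), replicate_succ, flatten_cons,
      getElem?_append_right (by omega), ← flatten_cons, ← replicate_succ, replicate_succ',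
      flatten_concat, getElem?_append_left (by omega), Nat.add_sub_cancel]
  · intro hf
    refine ⟨(range m).map f, by simp, ?_⟩
    induction n generalizing f with
    | zero => simp
    | succ n ih =>
      have hshift : (replicate n ((range m).map f)).flatten = (range (n * m)).map (f <| m + ·) := by
        rcases n with _ | n
        · simp
        · rw [← ih _ fun j hj => by simpa [add_assoc] using hf (m + j) (by rw [add_mul]; omega)]
          congr 2
          exact map_congr_left fun i hi => by
            rw [add_comm m i, hf i (by rw [mem_range] at hi; nlinarith)]
      rw [replicate_succ, flatten_cons, hshift, add_mul, one_mul, add_comm, range_add, map_append,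
        List.map_map]
      rfl

def HasPeriodicFactor (α : ℝ) (m L : ℕ) : Prop :=
  ∃ x : ℝ, ∃ i : ℕ, ∀ j, j + m < L → sturmianLetter α x (i + j + m) = sturmianLetter α x (i + j)

theorem exists_isSlopeFactor_iff (α : ℝ) (m n : ℕ) :
    (∃ w : List ℤ, w.length = m ∧ IsSlopeFactor α (replicate n w).flatten) ↔
      HasPeriodicFactor α m (n * m) := by
  have hlen : ∀ w : List ℤ, w.length = m → (replicate n w).flatten.length = n * m := by
    rintro w rfl
    simp
  constructor
  · rintro ⟨w, hw, x, i, h⟩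
    rw [hlen w hw] at h
    refine ⟨x, i, fun j hj => ?_⟩
    simpa [add_assoc] using (exists_flatten_replicate_eq_map_range_iff _ m n).1 ⟨w, hw, h⟩ j hj
  · rintro ⟨x, i, h⟩
    obtain ⟨w, hw, h'⟩ :=
      (exists_flatten_replicate_eq_map_range_iff (sturmianLetter α x <| i + ·) m n).2
        fun j hj => by simpa [add_assoc] using h j hj
    exact ⟨w, hw, x, i, by rwa [hlen w hw]⟩

theorem maxPowerExponent_eq (α : ℝ) (m : ℕ) :
    maxPowerExponent α m = sSup {n | HasPeriodicFactor α m (n * m)} := by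
  simp only [maxPowerExponent, exists_isSlopeFactor_iff]

section Bounded

variable {α : ℝ} {m B : ℕ}

theorem bddAbove_setOf_hasPeriodicFactor (hm : 0 < m)
    (h : ∀ n, HasPeriodicFactor α m (n * m) → n * m < B) :
    BddAbove {n | HasPeriodicFactor α m (n * m)} :=
  ⟨B, fun n hn => (Nat.le_mul_of_pos_right n hm).trans (h n hn).le⟩

theorem maxPowerExponent_mul_lt (hm : 0 < m)
    (h : ∀ n, HasPeriodicFactor α m (n * m) → n * m < B) : maxPowerExponent α m * m < B := by
  rw [maxPowerExponent_eq]
  refine h _ (Nat.sSup_mem ⟨0, ?_⟩ (bddAbove_setOf_hasPeriodicFactor hm h))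
  exact ⟨0, 0, fun j hj => by simp at hj⟩

theorem le_maxPowerExponent (hm : 0 < m) (h : ∀ n, HasPeriodicFactor α m (n * m) → n * m < B)
    {n : ℕ} (hn : HasPeriodicFactor α m (n * m)) : n ≤ maxPowerExponent α m := by
  rw [maxPowerExponent_eq]
  exact le_csSup (bddAbove_setOf_hasPeriodicFactor hm h) hn

end Bounded

theorem sturmianLetter_add_eq_of_floor_eq {α x : ℝ} {k m : ℕ} {P : ℤ}
    (h₀ : ⌊k * α + x + (m * α - P)⌋ = ⌊k * α + x⌋)
    (h₁ : ⌊(k + 1) * α + x + (m * α - P)⌋ = ⌊(k + 1) * α + x⌋) :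
    sturmianLetter α x (k + m) = sturmianLetter α x k := by
  have shift (y : ℝ) : ⌊y + m * α⌋ = ⌊y + (m * α - P)⌋ + P := by
    rw [← Int.floor_add_intCast]
    ring_nf
  simp only [sturmianLetter]
  push_cast
  rw [show ((k : ℝ) + m + 1) * α + x = ((k : ℝ) + 1) * α + x + m * α by ring,
    show ((k : ℝ) + m) * α + x = k * α + x + m * α by ring, shift, shift, h₀, h₁]
  ring

theorem sturmianLetter_add_ne_of_fract {α x : ℝ} {k m : ℕ}
    (h₁ : 1 - α ≤ Int.fract (k * α + x)) (h₂ : 1 - Int.fract (m * α) ≤ Int.fract (k * α + x))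
    (h₃ : Int.fract (k * α + x) + α + Int.fract (m * α) < 2) :
    sturmianLetter α x (k + m) ≠ sturmianLetter α x k := by
  have hy := Int.floor_add_fract (k * α + x)
  have hm := Int.floor_add_fract (m * α)
  have := Int.fract_lt_one (k * α + x)
  have := Int.fract_nonneg (m * α)
  have := Int.fract_lt_one (m * α)
  have e₁ : ⌊k * α + x + α⌋ = ⌊k * α + x⌋ + 1 :=
    Int.floor_eq_iff.2 ⟨by push_cast; linarith, by push_cast; linarith⟩
  have e₂ : ⌊k * α + x + m * α⌋ = ⌊k * α + x⌋ + ⌊m * α⌋ + 1 :=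
    Int.floor_eq_iff.2 ⟨by push_cast; linarith, by push_cast; linarith⟩
  have e₃ : ⌊k * α + x + m * α + α⌋ = ⌊k * α + x⌋ + ⌊m * α⌋ + 1 :=
    Int.floor_eq_iff.2 ⟨by push_cast; linarith, by push_cast; linarith⟩
  simp only [sturmianLetter]
  push_cast
  rw [show ((k : ℝ) + m + 1) * α + x = k * α + x + m * α + α by ring,
    show ((k : ℝ) + m) * α + x = k * α + x + m * α by ring,
    show ((k : ℝ) + 1) * α + x = k * α + x + α by ring, e₁, e₂, e₃]
  omega

theorem floor_add_eq_floor_of_le_abs_sub {y ε : ℝ} (h : ∀ N : ℤ, |ε| ≤ |y - N|)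
    (hne : ∀ N : ℤ, y + ε ≠ N) : ⌊y + ε⌋ = ⌊y⌋ := by
  apply le_antisymm
  · rw [Int.le_floor]
    by_contra! hlt
    have hN := h ⌊y + ε⌋
    rw [abs_sub_comm, abs_of_pos (sub_pos.2 hlt)] at hN
    exact hne _ (le_antisymm (by linarith [le_abs_self ε]) (Int.floor_le _))
  · rw [Int.le_floor]
    by_contra! hlt
    have hN := h ⌊y⌋
    rw [abs_of_nonneg (sub_nonneg.2 (Int.floor_le y))] at hN
    linarith [neg_le_abs ε]

theorem exists_add_nat_mul_mem {d θ θ' : ℝ} {N : ℕ} (hd : d ∈ Set.Ioc (-θ) 0)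
    (hθ' : 0 < θ') (hN : θ ≤ N * θ') :
    (∃ v ≤ N, d + v * θ' ∈ Set.Ico 0 θ') ∧ (∃ v ≤ N, d + v * θ' ∈ Set.Ioc (-θ') 0) := by
  obtain ⟨hd₁, hd₂⟩ := hd
  have hx : 0 ≤ -d / θ' := div_nonneg (by linarith) hθ'.le
  have hxN : ⌈-d / θ'⌉₊ ≤ N := Nat.ceil_le.2 ((div_le_iff₀ hθ').2 (by linarith))
  have h₁ := (div_le_iff₀ hθ').1 (Nat.le_ceil (-d / θ'))
  have h₂ := (lt_div_iff₀ hθ').1 (sub_lt_iff_lt_add.2 (Nat.ceil_lt_add_one hx))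
  have h₃ := (le_div_iff₀ hθ').1 (Nat.floor_le hx)
  have h₄ := (div_lt_iff₀ hθ').1 (Nat.lt_floor_add_one (-d / θ'))
  refine ⟨⟨_, hxN, ?_, ?_⟩, ⟨_, (Nat.floor_le_ceil _).trans hxN, ?_, ?_⟩⟩ <;> nlinarith

def ApproachesIntegers (α θ : ℝ) (B : ℕ) : Prop :=
  ∀ z : ℝ, (∃ j < B, ∃ k : ℤ, z + j * α - k ∈ Set.Ico 0 θ) ∧
    (∃ j < B, ∃ k : ℤ, z + j * α - k ∈ Set.Ioc (-θ) 0)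

namespace ApproachesIntegers

variable {α θ θ' : ℝ} {B : ℕ}

theorem _root_.Sturmian.approachesIntegers_one (α : ℝ) : ApproachesIntegers α 1 1 := by
  refine fun z => ⟨⟨0, one_pos, ⌊z⌋, ?_, ?_⟩, ⟨0, one_pos, ⌈z⌉, ?_, ?_⟩⟩ <;> simp <;>
    linarith [Int.floor_le z, Int.lt_floor_add_one z, Int.ceil_lt_add_one z, Int.le_ceil z,
      Int.fract_lt_one z]

theorem mono (h : ApproachesIntegers α θ B) {B' : ℕ} (hB : B ≤ B') :
    ApproachesIntegers α θ B' := fun z =>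
  have ⟨⟨j, hj, hj'⟩, ⟨i, hi, hi'⟩⟩ := h z
  ⟨⟨j, hj.trans_le hB, hj'⟩, ⟨i, hi.trans_le hB, hi'⟩⟩

theorem neg (h : ApproachesIntegers α θ B) : ApproachesIntegers (-α) θ B := by
  intro z
  obtain ⟨⟨j, hj, k, hk⟩, ⟨i, hi, l, hl⟩⟩ := h (-z)
  refine ⟨⟨i, hi, -l, ?_⟩, ⟨j, hj, -k, ?_⟩⟩
  · simp only [Set.mem_Ioc, Set.mem_Ico] at hl ⊢
    push_cast
    constructor <;> linarith
  · simp only [Set.mem_Ioc, Set.mem_Ico] at hk ⊢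
    push_cast
    constructor <;> linarith

theorem step_of_sub_eq (h : ApproachesIntegers α θ B) {n N : ℕ} {p : ℤ} (hθ' : 0 < θ')
    (hN : θ ≤ N * θ') (hn : n * α - p = θ') : ApproachesIntegers α θ' (B + N * n) := by
  intro z
  obtain ⟨-, j, hj, k, hk⟩ := h z
  obtain ⟨⟨v, hv, hv'⟩, ⟨v', hv'N, hv''⟩⟩ := exists_add_nat_mul_mem hk hθ' hN
  have hval (v : ℕ) : z + ((j + v * n : ℕ) : ℝ) * α - ((k + v * p : ℤ) : ℝ)
      = z + j * α - k + v * θ' := by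
    rw [← hn]
    push_cast
    ring
  have hlt {v : ℕ} (hv : v ≤ N) : j + v * n < B + N * n :=
    Nat.add_lt_add_of_lt_of_le hj (Nat.mul_le_mul_right n hv)
  exact ⟨⟨_, hlt hv, _, by rwa [hval]⟩, ⟨_, hlt hv'N, _, by rwa [hval]⟩⟩

theorem step (h : ApproachesIntegers α θ B) {n N : ℕ} {p : ℤ} (hθ' : 0 < θ')
    (hN : θ ≤ N * θ') (hn : |n * α - p| = θ') : ApproachesIntegers α θ' (B + N * n) := by
  rcases (abs_eq hθ'.le).1 hn with hn | hn
  · exact h.step_of_sub_eq hθ' hN hn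
  · simpa using (h.neg.step_of_sub_eq (p := -p) hθ' hN (by push_cast; linarith)).neg

/-- On `[β, β + θ)` the letter at `k` is `1` and the letter at `k + m` is `0`, and the orbit
enters this interval within `B` steps. -/
theorem lt_add_of_hasPeriodicFactor {m L : ℕ}
    (hR : ApproachesIntegers α θ B) (hα : θ ≤ α) (hα' : θ ≤ 1 - α) (hδ : θ ≤ Int.fract (m * α))
    (hδ' : θ ≤ 1 - Int.fract (m * α)) (h : HasPeriodicFactor α m L) : L < B + m := by
  obtain ⟨x, i, hper⟩ := h
  by_contra! hL
  set δ := Int.fract (m * α)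
  set β := max (1 - α) (1 - δ)
  obtain ⟨⟨j, hj, k, hk₀, hk₁⟩, -⟩ := hR (i * α + x - β)
  have hβ : β ≤ 1 - θ := max_le (by linarith) (by linarith)
  have hβ' : β ≤ 2 - θ - α - δ := max_le (by linarith) (by linarith)
  have hfract : Int.fract (((i + j : ℕ) : ℝ) * α + x) = i * α + x - β + j * α - k + β := by
    rw [Int.fract_eq_iff]
    refine ⟨by linarith [le_max_left (1 - α) (1 - δ)], by linarith, k, by push_cast; ring⟩
  refine sturmianLetter_add_ne_of_fract ?_ ?_ ?_ (hper j (by omega)) <;> rw [hfract]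
  · linarith [le_max_left (1 - α) (1 - δ)]
  · linarith [le_max_right (1 - α) (1 - δ)]
  · linarith

end ApproachesIntegers

theorem ne_zero_and_mul_nonpos_of_add_eq {u v Q Q' r : ℤ} (h : u * Q + v * Q' = r) (hr : 0 < r)
    (hr' : r < Q') (hQ : 0 ≤ Q) : u ≠ 0 ∧ u * v ≤ 0 := by
  constructor
  · rintro rfl
    rcases le_or_gt v 0 with hv | hv <;> nlinarith
  · by_contra! huv
    rcases lt_or_gt_of_ne (left_ne_zero_of_mul huv.ne') with hu | hu
    · nlinarith [neg_of_mul_pos_right huv hu.le]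
    · nlinarith [pos_of_mul_pos_right huv hu.le]

theorem le_abs_mul_sub_mul {u v : ℤ} {θ θ' : ℝ} (hu : u ≠ 0) (huv : u * v ≤ 0) (hθ : 0 ≤ θ)
    (hθ' : 0 ≤ θ') : θ ≤ |u * θ - v * θ'| := by
  rcases lt_or_gt_of_ne hu with hu | hu
  · have hv : (0 : ℝ) ≤ v := by exact_mod_cast nonneg_of_mul_nonpos_right huv hu
    have hu : (u : ℝ) ≤ -1 := by exact_mod_cast Int.le_sub_one_of_lt hu
    nlinarith [neg_le_abs ((u : ℝ) * θ - v * θ')]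
  · have hv : (v : ℝ) ≤ 0 := by exact_mod_cast nonpos_of_mul_nonpos_right huv hu
    have hu : (1 : ℝ) ≤ u := by exact_mod_cast hu
    nlinarith [le_abs_self ((u : ℝ) * θ - v * θ')]

/-- `α = [0; a 0, a 1, …]`; `q (t + 1)` and `p (t + 1)` are the `q_t` and `p_t` of the paper. -/
structure PartialQuotients where
  a : ℕ → ℕ
  one_le : ∀ t, 1 ≤ a t
  two_le_zero : 2 ≤ a 0

namespace PartialQuotients

variable (c : PartialQuotients)

def q : ℕ → ℕ
  | 0 => 0
  | 1 => 1
  | t + 2 => c.a t * q (t + 1) + q t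

def p : ℕ → ℕ
  | 0 => 1
  | 1 => 0
  | t + 2 => c.a t * p (t + 1) + p t

@[simp] theorem q_zero : c.q 0 = 0 := rfl
@[simp] theorem q_one : c.q 1 = 1 := rfl
@[simp] theorem q_two : c.q 2 = c.a 0 := by simp [q]
theorem q_add_two (t : ℕ) : c.q (t + 2) = c.a t * c.q (t + 1) + c.q t := rfl
@[simp] theorem p_zero : c.p 0 = 1 := rfl
@[simp] theorem p_one : c.p 1 = 0 := rfl
@[simp] theorem p_two : c.p 2 = 1 := by simp [p]
theorem p_add_two (t : ℕ) : c.p (t + 2) = c.a t * c.p (t + 1) + c.p t := rfl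

theorem q_add_le_q_add_two (t : ℕ) : c.q (t + 1) + c.q t ≤ c.q (t + 2) := by
  rw [q_add_two]
  nlinarith [c.one_le t]

theorem q_pos (t : ℕ) : 0 < c.q (t + 1) := by
  induction t with
  | zero => simp
  | succ t ih => linarith [c.q_add_le_q_add_two t]

theorem q_strictMono : StrictMono c.q := by
  refine strictMono_nat_of_lt_succ fun t => ?_
  rcases t with _ | _ | t
  · simp
  · exact c.q_two ▸ c.two_le_zero
  · linarith [c.q_add_le_q_add_two (t + 1), c.q_pos t]

theorem determinant (t : ℕ) : (c.p (t + 1) * c.q t - c.p t * c.q (t + 1) : ℤ) = (-1) ^ (t + 1) := by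
  induction t with
  | zero => simp
  | succ t ih =>
    rw [p_add_two, q_add_two, pow_succ, ← ih]
    push_cast
    ring

theorem determinant_add_two (t : ℕ) :
    (c.p (t + 2) * c.q t - c.p t * c.q (t + 2) : ℤ) = c.a t * (-1) ^ (t + 1) := by
  rw [p_add_two, q_add_two, ← determinant]
  push_cast
  ring

noncomputable def convergent (t : ℕ) : ℝ := c.p t / c.q t

theorem convergent_lt_convergent {t t' : ℕ} (h : 0 < (c.p t' * c.q t - c.p t * c.q t' : ℤ))
    (ht : 0 < c.q t) (ht' : 0 < c.q t') : c.convergent t < c.convergent t' := by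
  rw [convergent, convergent, div_lt_div_iff₀ (by exact_mod_cast ht) (by exact_mod_cast ht')]
  exact_mod_cast sub_pos.1 h

theorem convergent_odd_lt_succ (s : ℕ) : c.convergent (2 * s + 1) < c.convergent (2 * s + 2) :=
  c.convergent_lt_convergent (by rw [c.determinant, Even.neg_one_pow ⟨s + 1, by ring⟩]; norm_num)
    (c.q_pos _) (c.q_pos _)

theorem convergent_odd_strictMono : StrictMono fun s => c.convergent (2 * s + 1) := by
  refine strictMono_nat_of_lt_succ fun s => c.convergent_lt_convergent ?_ (c.q_pos _) (c.q_pos _)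
  rw [show 2 * (s + 1) + 1 = 2 * s + 1 + 2 by ring, c.determinant_add_two,
    Even.neg_one_pow ⟨s + 1, by ring⟩]
  simp only [mul_one, Nat.cast_pos]
  exact c.one_le _

theorem convergent_even_strictAnti : StrictAnti fun s => c.convergent (2 * s + 2) := by
  refine strictAnti_nat_of_succ_lt fun s => c.convergent_lt_convergent ?_ (c.q_pos _) (c.q_pos _)
  rw [show 2 * (s + 1) + 2 = 2 * s + 2 + 2 by ring, ← neg_sub, c.determinant_add_two,
    Odd.neg_one_pow ⟨s + 1, by ring⟩]
  simp only [mul_one, mul_neg, neg_neg, Nat.cast_pos]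
  exact c.one_le _

theorem convergent_odd_lt_even (u v : ℕ) : c.convergent (2 * u + 1) < c.convergent (2 * v + 2) :=
  calc c.convergent (2 * u + 1) ≤ c.convergent (2 * max u v + 1) :=
        c.convergent_odd_strictMono.monotone (le_max_left u v)
    _ < c.convergent (2 * max u v + 2) := c.convergent_odd_lt_succ _
    _ ≤ c.convergent (2 * v + 2) := c.convergent_even_strictAnti.antitone (le_max_right u v)

noncomputable def value : ℝ := ⨆ s, c.convergent (2 * s + 1)

theorem convergent_odd_lt_value (s : ℕ) : c.convergent (2 * s + 1) < c.value :=
  (c.convergent_odd_strictMono s.lt_succ_self).trans_le <|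
    le_ciSup ⟨_, Set.forall_mem_range.2 fun u => (c.convergent_odd_lt_even u 0).le⟩ (s + 1)

theorem value_lt_convergent_even (s : ℕ) : c.value < c.convergent (2 * s + 2) :=
  (ciSup_le fun u => (c.convergent_odd_lt_even u (s + 1)).le).trans_lt
    (c.convergent_even_strictAnti s.lt_succ_self)

theorem value_pos : 0 < c.value := by
  simpa [convergent] using c.convergent_odd_lt_value 0

theorem value_lt_half : c.value < 1 / 2 := by
  refine (c.value_lt_convergent_even 0).trans_le ?_
  simp only [convergent, mul_zero, zero_add, p_two, q_two, Nat.cast_one]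
  gcongr
  exact_mod_cast c.two_le_zero

noncomputable def θ (t : ℕ) : ℝ := (-1) ^ (t + 1) * (c.q t * c.value - c.p t)

@[simp] theorem θ_zero : c.θ 0 = 1 := by simp [θ]
@[simp] theorem θ_one : c.θ 1 = c.value := by simp [θ]

theorem θ_pos (t : ℕ) : 0 < c.θ t := by
  obtain ⟨s, rfl | rfl⟩ := Nat.even_or_odd' t
  · rcases s with _ | s
    · simp
    · have h := c.value_lt_convergent_even s
      rw [convergent, lt_div_iff₀ (by exact_mod_cast c.q_pos _)] at h
      rw [θ, show 2 * (s + 1) = 2 * s + 2 by ring, Odd.neg_one_pow ⟨s + 1, by ring⟩]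
      linarith
  · have h := c.convergent_odd_lt_value s
    rw [convergent, div_lt_iff₀ (by exact_mod_cast c.q_pos _)] at h
    rw [θ, Even.neg_one_pow ⟨s + 1, by ring⟩]
    linarith

theorem abs_sub_eq_θ (t : ℕ) : |c.q t * c.value - c.p t| = c.θ t := by
  rw [← abs_of_pos (c.θ_pos t), θ, abs_mul, abs_pow, abs_neg, abs_one, one_pow, one_mul]

theorem θ_add_two (t : ℕ) : c.θ (t + 2) = c.θ t - c.a t * c.θ (t + 1) := by
  simp only [θ, q_add_two, p_add_two, pow_succ]
  push_cast
  ring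

theorem θ_succ_lt (t : ℕ) : c.θ (t + 1) < c.θ t := by
  have := c.θ_add_two t
  have : (1 : ℝ) ≤ c.a t := by exact_mod_cast c.one_le t
  nlinarith [c.θ_pos (t + 1), c.θ_pos (t + 2)]

theorem q_mul_θ_add_q_mul_θ (t : ℕ) : c.q (t + 1) * c.θ t + c.q t * c.θ (t + 1) = 1 := by
  induction t with
  | zero => simp
  | succ t ih =>
    rw [θ_add_two, q_add_two]
    push_cast
    linarith

theorem irrational_value : Irrational c.value := by
  rintro ⟨r, hr⟩
  have hqT : (r.den : ℝ) < c.q (r.den + 1) := by exact_mod_cast c.q_strictMono.id_le (r.den + 1)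
  set N : ℤ := c.q r.den * r.num - c.p r.den * r.den
  have hN : |(N : ℝ)| = r.den * c.θ r.den := by
    have : (N : ℝ) = r.den * (c.q r.den * c.value - c.p r.den) := by
      rw [← hr, Rat.cast_def]
      push_cast [N]
      field_simp
    rw [this, abs_mul, Nat.abs_cast, c.abs_sub_eq_θ]
  have hlt : (r.den : ℝ) * c.θ r.den < 1 := by
    nlinarith [c.q_mul_θ_add_q_mul_θ r.den, c.θ_pos r.den, c.θ_pos (r.den + 1),
      Nat.cast_nonneg (α := ℝ) (c.q r.den)]
  have hpos : (0 : ℝ) < r.den * c.θ r.den := mul_pos (by exact_mod_cast r.den_pos) (c.θ_pos r.den)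
  rw [← hN, ← Int.cast_abs] at hlt hpos
  have : 0 < |N| ∧ |N| < 1 := ⟨by exact_mod_cast hpos, by exact_mod_cast hlt⟩
  omega

theorem θ_le_abs_mul_sub {t r : ℕ} (hr : 0 < r) (hr' : r < c.q (t + 1)) (s : ℤ) :
    c.θ t ≤ |r * c.value - s| := by
  set e : ℤ := (-1) ^ (t + 1)
  have he : e * e = 1 := by rw [← mul_pow]; norm_num
  have hdet : (c.p (t + 1) * c.q t - c.p t * c.q (t + 1) : ℤ) = e := c.determinant t
  -- `(u, v)` are the coordinates of `(r, s)` in the basis `(q t, p t), (q (t + 1), p (t + 1))`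
  -- of `ℤ²`, which is unimodular by `determinant`.
  set u : ℤ := e * (r * c.p (t + 1) - s * c.q (t + 1))
  set v : ℤ := e * (s * c.q t - r * c.p t)
  have hr_eq : u * c.q t + v * c.q (t + 1) = r := by linear_combination (e * r) * hdet + r * he
  have hs_eq : u * c.p t + v * c.p (t + 1) = s := by linear_combination (e * s) * hdet + s * he
  have hsub : (r : ℝ) * c.value - s = e * (u * c.θ t - v * c.θ (t + 1)) := by
    have hr_eq' : (u * c.q t + v * c.q (t + 1) : ℝ) = r := by exact_mod_cast hr_eq
    have hs_eq' : (u * c.p t + v * c.p (t + 1) : ℝ) = s := by exact_mod_cast hs_eq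
    have he' : (e : ℝ) * e = 1 := by exact_mod_cast he
    simp only [θ, pow_succ, e] at he' ⊢
    push_cast at he' ⊢
    linear_combination (-c.value) * hr_eq' + hs_eq' - (u * (c.q t * c.value - c.p t)
      + v * (c.q (t + 1) * c.value - c.p (t + 1))) * he'
  obtain ⟨hu, huv⟩ := ne_zero_and_mul_nonpos_of_add_eq hr_eq (by exact_mod_cast hr)
    (by exact_mod_cast hr') (by positivity)
  rw [hsub, abs_mul, show |(e : ℝ)| = 1 by simp [e], one_mul]
  exact le_abs_mul_sub_mul hu huv (c.θ_pos t).le (c.θ_pos (t + 1)).le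

theorem θ_le_fract {t r : ℕ} (hr : 0 < r) (hr' : r < c.q (t + 1)) :
    c.θ t ≤ Int.fract (r * c.value) ∧ c.θ t ≤ 1 - Int.fract (r * c.value) := by
  constructor
  · simpa [abs_of_nonneg (Int.fract_nonneg ((r : ℝ) * c.value))] using
      c.θ_le_abs_mul_sub hr hr' ⌊r * c.value⌋
  · have h := c.θ_le_abs_mul_sub hr hr' (⌊r * c.value⌋ + 1)
    rwa [Int.cast_add, Int.cast_one, ← sub_sub, abs_sub_comm, ← Int.fract, abs_of_nonneg
      (by linarith [Int.fract_lt_one (r * c.value)])] at h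

theorem θ_antitone : Antitone c.θ := antitone_nat_of_succ_le fun t => (c.θ_succ_lt t).le

theorem θ_succ_le_value (t : ℕ) : c.θ (t + 1) ≤ c.value :=
  c.θ_one ▸ c.θ_antitone (Nat.le_add_left 1 t)

theorem approachesIntegers_θ_succ {t B : ℕ} (h : ApproachesIntegers c.value (c.θ t) B) :
    ApproachesIntegers c.value (c.θ (t + 1)) (B + (c.a t + 1) * c.q (t + 1)) :=
  h.step (c.θ_pos _) (by push_cast; nlinarith [c.θ_add_two t, c.θ_succ_lt (t + 1)])
    (c.abs_sub_eq_θ _)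

theorem approachesIntegers_θ (t : ℕ) :
    ApproachesIntegers c.value (c.θ (t + 1)) (c.q (t + 2) + 3 * c.q (t + 1) + c.q t) := by
  induction t with
  | zero =>
    refine (c.approachesIntegers_θ_succ (B := 1) (by simpa using approachesIntegers_one _)).mono ?_
    simp
    omega
  | succ t ih =>
    refine (c.approachesIntegers_θ_succ ih).mono ?_
    rw [c.q_add_two (t + 1)]
    nlinarith [c.q_add_le_q_add_two t]

theorem mul_lt_of_hasPeriodicFactor {t m n : ℕ} (hm : 0 < m) (hmq : m < c.q (t + 2))
    (h : HasPeriodicFactor c.value m (n * m)) :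
    n * m < c.q (t + 2) + 3 * c.q (t + 1) + c.q t + m :=
  (c.approachesIntegers_θ t).lt_add_of_hasPeriodicFactor (c.θ_succ_le_value t)
    (by linarith [c.θ_succ_le_value t, c.value_lt_half]) (c.θ_le_fract hm hmq).1
    (c.θ_le_fract hm hmq).2 h

theorem sturmianLetter_add_q {t k : ℕ} (hk : 0 < k) (hkq : k + 1 < c.q (t + 1)) :
    sturmianLetter c.value 0 (k + c.q t) = sturmianLetter c.value 0 k := by
  have hfloor (r : ℕ) (hr : 0 < r) (hr' : r < c.q (t + 1)) :
      ⌊r * c.value + 0 + (c.q t * c.value - c.p t)⌋ = ⌊r * c.value + 0⌋ := by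
    rw [add_zero]
    refine floor_add_eq_floor_of_le_abs_sub (fun N => ?_) (fun N hN => ?_)
    · exact c.abs_sub_eq_θ t ▸ c.θ_le_abs_mul_sub hr hr' N
    · refine (c.irrational_value.natCast_mul (m := r + c.q t) (by omega)).ne_int (N + c.p t) ?_
      push_cast
      linarith
  refine sturmianLetter_add_eq_of_floor_eq (P := c.p t) (hfloor k hk (by omega)) ?_
  simpa using hfloor (k + 1) (by omega) hkq

theorem hasPeriodicFactor_q (t : ℕ) :
    HasPeriodicFactor c.value (c.q (t + 2)) (c.a (t + 1) * c.q (t + 2)) := by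
  have h₂ : c.q 2 ≤ c.q (t + 2) := c.q_strictMono.monotone (by omega)
  have h₃ : c.q (t + 3) = c.a (t + 1) * c.q (t + 2) + c.q (t + 1) := c.q_add_two (t + 1)
  refine ⟨0, 1, fun j hj => c.sturmianLetter_add_q (by omega) ?_⟩
  show 1 + j + 1 < c.q (t + 3)
  have := c.two_le_zero
  rw [q_two] at h₂
  omega

theorem a_le_maxPowerExponent (t : ℕ) :
    c.a (t + 1) ≤ maxPowerExponent c.value (c.q (t + 2)) :=
  le_maxPowerExponent (c.q_pos _)
    (fun _ => c.mul_lt_of_hasPeriodicFactor (t := t + 1) (c.q_pos _) (c.q_strictMono (by omega)))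
    (c.hasPeriodicFactor_q t)

end PartialQuotients

theorem limsup_div_eq_of_le_add {u : ℕ → ℕ} {lam C : ℝ}
    (hup : ∀ m, 0 < m → (u m : ℝ) ≤ lam * m + C) (hlow : ∃ᶠ m in atTop, lam * m ≤ u m) :
    limsup (fun m => (u m : ℝ) / m) atTop = lam := by
  have hle : ∀ᶠ m in atTop, (u m : ℝ) / m ≤ lam + C / m :=
    (eventually_gt_atTop 0).mono fun m hm => by
      have hm' : (0 : ℝ) < m := by exact_mod_cast hm
      rw [div_le_iff₀ hm', add_mul, div_mul_cancel₀ _ hm'.ne']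
      exact hup m hm
  have hlim : Tendsto (fun m : ℕ => lam + C / m) atTop (𝓝 lam) := by
    simpa using tendsto_const_nhds.add (tendsto_const_div_atTop_nhds_zero_nat C)
  apply le_antisymm
  · calc limsup (fun m => (u m : ℝ) / m) atTop ≤ limsup (fun m : ℕ => lam + C / m) atTop :=
          limsup_le_limsup hle (isCoboundedUnder_le_of_le atTop fun m => by positivity)
            hlim.isBoundedUnder_le
      _ = lam := hlim.limsup_eq
  · refine le_limsup_of_frequently_le ?_ (hlim.isBoundedUnder_le.mono_le hle)
    exact (hlow.and_eventually (eventually_gt_atTop 0)).mono fun m ⟨h, hm⟩ =>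
      (le_div_iff₀ (by exact_mod_cast hm)).2 h

noncomputable def critCoeff (lam : ℝ) (n : ℕ) : ℕ := ⌈lam * n⌉₊ + 2

/-- The pairs `(q t, q (t + 1))` for the partial quotients `a t = critCoeff lam (q (t + 1))`. -/
noncomputable def critDenoms (lam : ℝ) : ℕ → ℕ × ℕ
  | 0 => (0, 1)
  | t + 1 => ((critDenoms lam t).2,
      critCoeff lam (critDenoms lam t).2 * (critDenoms lam t).2 + (critDenoms lam t).1)

noncomputable def critQuotients (lam : ℝ) : PartialQuotients where
  a t := critCoeff lam (critDenoms lam t).2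
  one_le _ := by simp [critCoeff]
  two_le_zero := by simp [critCoeff]

theorem critQuotients_q (lam : ℝ) (t : ℕ) :
    ((critQuotients lam).q t, (critQuotients lam).q (t + 1)) = critDenoms lam t := by
  induction t with
  | zero => rfl
  | succ t ih =>
    have ha : (critQuotients lam).a t = critCoeff lam ((critQuotients lam).q (t + 1)) := by
      show critCoeff lam (critDenoms lam t).2 = _
      rw [← ih]
    rw [critDenoms, ← ih, PartialQuotients.q_add_two, ha]

theorem critQuotients_a (lam : ℝ) (t : ℕ) :
    (critQuotients lam).a t = critCoeff lam ((critQuotients lam).q (t + 1)) := by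
  rw [show (critQuotients lam).q (t + 1) = (critDenoms lam t).2 by rw [← critQuotients_q]]
  rfl

theorem maxPowerExponent_critQuotients_le {lam : ℝ} (hlam : 0 ≤ lam) {m : ℕ} (hm : 0 < m) :
    (maxPowerExponent (critQuotients lam).value m : ℝ) ≤ lam * m + 9 := by
  set c := critQuotients lam
  obtain ⟨t, ht, ht'⟩ := StrictMono.exists_between_of_tendsto_atTop (t := fun t => c.q (t + 1))
    (c.q_strictMono.comp (strictMono_id.add_const 1))
    (c.q_strictMono.tendsto_atTop.comp (tendsto_add_atTop_nat 1)) (x := m + 1) (by simpa using hm)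
  have hmq : m < c.q (t + 2) := ht'
  have hE : (maxPowerExponent c.value m : ℝ) * m < c.q (t + 2) + 3 * c.q (t + 1) + c.q t + m := by
    exact_mod_cast maxPowerExponent_mul_lt hm fun _ => c.mul_lt_of_hasPeriodicFactor hm hmq
  have hq : (c.q (t + 2) : ℝ) = c.a t * c.q (t + 1) + c.q t := by exact_mod_cast c.q_add_two t
  have hqt : (c.q t : ℝ) ≤ c.q (t + 1) := by exact_mod_cast c.q_strictMono.monotone (by omega)
  have hqm : (c.q (t + 1) : ℝ) ≤ m := by exact_mod_cast Nat.lt_succ_iff.1 ht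
  have ha : (c.a t : ℝ) ≤ lam * c.q (t + 1) + 3 := by
    rw [critQuotients_a, critCoeff]
    push_cast
    linarith [Nat.ceil_lt_add_one (mul_nonneg hlam (Nat.cast_nonneg (α := ℝ) (c.q (t + 1))))]
  have h₁ : (c.a t : ℝ) * c.q (t + 1) ≤ (lam * c.q (t + 1) + 3) * c.q (t + 1) :=
    mul_le_mul_of_nonneg_right ha (Nat.cast_nonneg _)
  have h₂ : lam * c.q (t + 1) * c.q (t + 1) ≤ lam * m * m := by gcongr
  refine (lt_of_mul_lt_mul_right (a := (m : ℝ)) ?_ (Nat.cast_nonneg _)).le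
  nlinarith

theorem le_maxPowerExponent_critQuotients (lam : ℝ) (t : ℕ) :
    lam * (critQuotients lam).q (t + 2) ≤
      maxPowerExponent (critQuotients lam).value ((critQuotients lam).q (t + 2)) := by
  refine le_trans ?_ (Nat.cast_le.2 ((critQuotients lam).a_le_maxPowerExponent t))
  rw [critQuotients_a, critCoeff]
  push_cast
  linarith [Nat.le_ceil (lam * (critQuotients lam).q (t + 2))]

end Sturmian

theorem every_nonneg_real_is_critical_exponent (lam : ℝ) (hlam : 0 ≤ lam) :
    ∃ α : ℝ, Irrational α ∧ α ∈ Set.Ioo (0:ℝ) 1 ∧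
      Filter.limsup (fun m : ℕ => (maxPowerExponent α m : ℝ) / (m : ℝ)) Filter.atTop = lam := by
  set c := Sturmian.critQuotients lam
  have hup (m : ℕ) (hm : 0 < m) : (maxPowerExponent c.value m : ℝ) ≤ lam * m + 9 :=
    Sturmian.maxPowerExponent_critQuotients_le hlam hm
  have hlow : ∃ᶠ m in atTop, lam * m ≤ maxPowerExponent c.value m :=
    frequently_atTop.2 fun N => ⟨c.q (N + 2), (Nat.le_add_right N 2).trans (c.q_strictMono.id_le _),
      Sturmian.le_maxPowerExponent_critQuotients lam N⟩
  exact ⟨c.value, c.irrational_value, ⟨c.value_pos, by linarith [c.value_lt_half]⟩,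
    Sturmian.limsup_div_eq_of_le_add hup hlow⟩
end
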